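/- arXiv:1509.03204 — 5 statements merged into one kernel-verified Lean document; each statement's English description precedes it below -/
import Mathlib

section
/- Let w(x) = log²(2+|x|) for x ∈ ℝ². There is a constant C such that for every t > 2, every measurable f : ℝ² → ℂ with ∫_{ℝ²} w(y)|f(y)| dy < ∞, and every x ∈ ℝ², the free two-dimensional Schrödinger evolution satisfies |(1/(4πit)) ∫_{ℝ²} (e^{−i|x−y|²/(4t)} − 1) f(y) dy| ≤ C · w(x) · (t (log t)²)^{−1} · ∫_{ℝ²} w(y)|f(y)| dy. Equivalently, ‖w^{−1}(e^{−itΔ}f − t^{−1}ψ⟨f,ψ⟩)‖_{L^∞(ℝ²)} ≲ (t log²t)^{−1} ‖wf‖_{L¹(ℝ²)} with ψ ≡ const, where e^{−itΔ}f(x) = (4πit)^{−1} ∫_{ℝ²} e^{−i|x−y|²/(4t)} f(y) dy. -/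
/-!
The phase factor obeys `|e^{-i|x-y|²/(4t)} - 1| ≤ min(2, |x-y|²/(4t)) ≤ 2 min(1, r²/t)` with
`r = |x-y|`, and `min(1, r²/t) log² t ≲ log²(2+r)`: if `√t ≤ r²` then `log t ≤ 4 log r`, while
otherwise `r²/t ≤ t^{-1/2}` and `log² t ≤ 16 √t`. Since `2 + |x-y| ≤ (2+|x|)(2+|y|)` and both
logarithms are at least `log 2`, `log²(2+|x-y|) ≲ w(x) w(y)`. Integrating this pointwise bound
against `|f|`, and using `|1/(4πit)| ≤ 1/t`, gives the estimate.
-/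

open MeasureTheory Real Complex

noncomputable section

abbrev Plane : Type := EuclideanSpace ℝ (Fin 2)

def wt (x : Plane) : ℝ := (Real.log (2 + ‖x‖)) ^ 2

lemma norm_exp_I_mul_ofReal_sub_one_le_min (θ : ℝ) :
    ‖Complex.exp (I * θ) - 1‖ ≤ min 2 |θ| := by
  refine le_min ?_ (Real.norm_exp_I_mul_ofReal_sub_one_le.trans_eq (Real.norm_eq_abs θ))
  calc ‖Complex.exp (I * θ) - 1‖ ≤ ‖Complex.exp (I * θ)‖ + ‖(1 : ℂ)‖ := norm_sub_le _ _
    _ = 2 := by rw [norm_exp_I_mul_ofReal, norm_one]; norm_num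

lemma min_one_div_mul_sq_log_le {t r : ℝ} (ht : 1 ≤ t) (hr : 0 ≤ r) :
    min 1 (r ^ 2 / t) * Real.log t ^ 2 ≤ 16 * (Real.log (2 + r) / Real.log 2) ^ 2 := by
  have hlog2 : 0 < Real.log 2 := Real.log_pos one_lt_two
  have hlog2_le_one : Real.log 2 ≤ 1 := Real.log_two_lt_d9.le.trans (by norm_num)
  have hratio : 1 ≤ Real.log (2 + r) / Real.log 2 :=
    (one_le_div hlog2).mpr (Real.log_le_log two_pos (by linarith))
  have hlog_nonneg : 0 ≤ Real.log (2 + r) := Real.log_nonneg (by linarith)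
  have hlog_le_ratio : Real.log (2 + r) ≤ Real.log (2 + r) / Real.log 2 :=
    le_div_self hlog_nonneg hlog2 hlog2_le_one
  have hlogt : 0 ≤ Real.log t := Real.log_nonneg ht
  have hsqrt : √t * √t = t := mul_self_sqrt (by linarith)
  rcases le_or_gt (√t) (r ^ 2) with hlarge | hsmall
  · have hlog : Real.log t ≤ 4 * Real.log (2 + r) := by
      have hr1 : 1 ≤ r := by nlinarith [one_le_sqrt.mpr ht]
      calc Real.log t = Real.log (√t * √t) := by rw [hsqrt]
        _ ≤ Real.log (r ^ 2 * r ^ 2) := Real.log_le_log (by positivity) (by gcongr)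
        _ = 4 * Real.log r := by rw [← pow_add, Real.log_pow]; norm_num
        _ ≤ 4 * Real.log (2 + r) := by gcongr; linarith
    calc min 1 (r ^ 2 / t) * Real.log t ^ 2 ≤ 1 * (4 * Real.log (2 + r)) ^ 2 := by
          gcongr
          exact min_le_left _ _
      _ = 16 * Real.log (2 + r) ^ 2 := by ring
      _ ≤ 16 * (Real.log (2 + r) / Real.log 2) ^ 2 := by gcongr
  · have hlog_sq : Real.log t ^ 2 ≤ 16 * √t := by
      have h := Real.log_le_rpow_div (by linarith : (0 : ℝ) ≤ t) (by norm_num : (0 : ℝ) < 1 / 4)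
      calc Real.log t ^ 2 ≤ (t ^ (1 / 4 : ℝ) / (1 / 4)) ^ 2 := by gcongr
        _ = 16 * √t := by
          rw [div_pow, ← Real.rpow_mul_natCast (by linarith), Real.sqrt_eq_rpow]
          norm_num
          ring
    calc min 1 (r ^ 2 / t) * Real.log t ^ 2 ≤ (√t / t) * (16 * √t) := by
          gcongr
          exact (min_le_right _ _).trans (by gcongr)
      _ = 16 := by field_simp; exact Real.sq_sqrt (by linarith)
      _ ≤ 16 * (Real.log (2 + r) / Real.log 2) ^ 2 := by nlinarith

lemma log_two_add_norm_sub_le {E : Type*} [SeminormedAddCommGroup E] (x y : E) :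
    Real.log (2 + ‖x - y‖) ≤ Real.log (2 + ‖x‖) + Real.log (2 + ‖y‖) := by
  rw [← Real.log_mul (by positivity) (by positivity)]
  refine Real.log_le_log (by positivity) ?_
  nlinarith [norm_sub_le x y, norm_nonneg x, norm_nonneg y, mul_nonneg (norm_nonneg x) (norm_nonneg y)]

lemma sq_log_two_add_norm_sub_le_wt_mul_wt (x y : Plane) :
    Real.log (2 + ‖x - y‖) ^ 2 ≤ (2 / Real.log 2) ^ 2 * (wt x * wt y) := by
  have hlog2 : 0 < Real.log 2 := Real.log_pos one_lt_two
  have hx : Real.log 2 ≤ Real.log (2 + ‖x‖) := Real.log_le_log two_pos (by simp)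
  have hy : Real.log 2 ≤ Real.log (2 + ‖y‖) := Real.log_le_log two_pos (by simp)
  have hsum : Real.log (2 + ‖x‖) + Real.log (2 + ‖y‖) ≤
      2 / Real.log 2 * (Real.log (2 + ‖x‖) * Real.log (2 + ‖y‖)) := by
    rw [div_mul_eq_mul_div, le_div_iff₀ hlog2]
    nlinarith
  calc Real.log (2 + ‖x - y‖) ^ 2
      ≤ (2 / Real.log 2 * (Real.log (2 + ‖x‖) * Real.log (2 + ‖y‖))) ^ 2 := by
        gcongr
        · exact Real.log_nonneg (by linarith [norm_nonneg (x - y)])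
        · exact (log_two_add_norm_sub_le x y).trans hsum
    _ = (2 / Real.log 2) ^ 2 * (wt x * wt y) := by rw [wt, wt]; ring

lemma norm_exp_neg_I_mul_sq_div_sub_one_le {t : ℝ} (ht : 1 < t) (x y : Plane) :
    ‖Complex.exp (-I * (‖x - y‖ : ℂ) ^ 2 / (4 * (t : ℂ))) - 1‖ ≤
      128 / Real.log 2 ^ 4 * wt x * wt y / Real.log t ^ 2 := by
  set r := ‖x - y‖
  have ht0 : 0 < t := by linarith
  have hphase : -I * (r : ℂ) ^ 2 / (4 * (t : ℂ)) = I * ((-(r ^ 2 / (4 * t)) : ℝ) : ℂ) := by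
    push_cast; ring
  have hexp : ‖Complex.exp (-I * (r : ℂ) ^ 2 / (4 * (t : ℂ))) - 1‖ ≤ 2 * min 1 (r ^ 2 / t) := by
    rw [hphase, mul_min_of_nonneg _ _ zero_le_two, mul_one]
    refine (norm_exp_I_mul_ofReal_sub_one_le_min _).trans (min_le_min le_rfl ?_)
    rw [abs_neg, abs_of_nonneg (by positivity), show r ^ 2 / (4 * t) = r ^ 2 / t / 4 by ring]
    linarith [div_nonneg (sq_nonneg r) ht0.le]
  rw [le_div_iff₀ (by have := Real.log_pos ht; positivity)]
  calc ‖Complex.exp (-I * (r : ℂ) ^ 2 / (4 * (t : ℂ))) - 1‖ * Real.log t ^ 2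
      ≤ 2 * (min 1 (r ^ 2 / t) * Real.log t ^ 2) := by
        rw [← mul_assoc]; gcongr
    _ ≤ 2 * (16 * (Real.log (2 + r) / Real.log 2) ^ 2) := by
        gcongr 2 * ?_; exact min_one_div_mul_sq_log_le ht.le (norm_nonneg _)
    _ = 32 / Real.log 2 ^ 2 * Real.log (2 + r) ^ 2 := by ring
    _ ≤ 32 / Real.log 2 ^ 2 * ((2 / Real.log 2) ^ 2 * (wt x * wt y)) := by
        gcongr; exact sq_log_two_add_norm_sub_le_wt_mul_wt x y
    _ = 128 / Real.log 2 ^ 4 * wt x * wt y := by ring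

/-- Weighted dispersive estimate for the free two-dimensional Schrödinger
evolution in the presence of the constant s-wave resonance: for `t > 2`,
`|(1/(4πit)) ∫ (e^{−i|x−y|²/(4t)} − 1) f(y) dy| ≤ C w(x) (t log²t)⁻¹ ∫ w |f|`. -/
theorem free_weighted_dispersive_estimate :
    ∃ C : ℝ, 0 < C ∧ ∀ t : ℝ, 2 < t →
      ∀ f : Plane → ℂ, Measurable f →
        Integrable (fun y : Plane => wt y * ‖f y‖) →
        ∀ x : Plane,
          ‖(1 / (4 * Real.pi * Complex.I * (t : ℂ))) *
              ∫ y : Plane,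
                (Complex.exp (-Complex.I * (‖x - y‖ : ℂ) ^ 2 / (4 * (t : ℂ))) - 1) * f y‖ ≤
            C * wt x * (t * (Real.log t) ^ 2)⁻¹ * ∫ y : Plane, wt y * ‖f y‖ := by
  set C : ℝ := 128 / Real.log 2 ^ 4
  refine ⟨C, by positivity, fun t ht f _ hf x => ?_⟩
  have ht0 : 0 < t := by linarith
  have hprefactor : ‖1 / (4 * Real.pi * Complex.I * (t : ℂ))‖ ≤ t⁻¹ := by
    have hnorm : ‖1 / (4 * Real.pi * Complex.I * (t : ℂ))‖ = (4 * Real.pi * t)⁻¹ := by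
      simp [abs_of_pos ht0, abs_of_pos pi_pos]
    rw [hnorm]
    gcongr
    nlinarith [pi_gt_three]
  have hintegral :
      ‖∫ y : Plane, (Complex.exp (-Complex.I * (‖x - y‖ : ℂ) ^ 2 / (4 * (t : ℂ))) - 1) * f y‖ ≤
        C * wt x / Real.log t ^ 2 * ∫ y : Plane, wt y * ‖f y‖ := by
    rw [← integral_const_mul]
    refine norm_integral_le_of_norm_le (hf.const_mul _) (.of_forall fun y => ?_)
    calc _ = ‖Complex.exp (-I * (‖x - y‖ : ℂ) ^ 2 / (4 * (t : ℂ))) - 1‖ * ‖f y‖ := norm_mul _ _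
      _ ≤ C * wt x * wt y / Real.log t ^ 2 * ‖f y‖ := by
        gcongr; exact norm_exp_neg_I_mul_sq_div_sub_one_le (by linarith) x y
      _ = C * wt x / Real.log t ^ 2 * (wt y * ‖f y‖) := by ring
  calc _ ≤ t⁻¹ * (C * wt x / Real.log t ^ 2 * ∫ y : Plane, wt y * ‖f y‖) := by
        rw [norm_mul]
        gcongr
    _ = C * wt x * (t * (Real.log t) ^ 2)⁻¹ * ∫ y : Plane, wt y * ‖f y‖ := by ring
end
end

section
/- There is an absolute constant C such that the following holds. Let ℰ : [0,∞) → ℂ be continuous at 0, twice continuously differentiable on (0,∞), and compactly supported. Then for every t > 2, | ∫₀^∞ e^{itλ²} λ ℰ(λ) dλ − i ℰ(0)/(2t) | ≤ C [ (1/t) ∫₀^{t^{−1/2}} |ℰ′(λ)| dλ + |ℰ′(t^{−1/2})| / t^{3/2} + (1/t²) ∫_{t^{−1/2}}^∞ | d/dλ ( ℰ′(λ)/λ ) | dλ ], provided the right-hand side is finite. -/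
/-!
Since `d/dλ e^{itλ²} = 2itλ e^{itλ²}`, one integration by parts on `(0, ∞)` turns
`∫ e^{itλ²} λ ℰ(λ) dλ` into the boundary term `iℰ(0)/(2t)` minus `(2it)⁻¹ ∫ e^{itλ²} ℰ′(λ) dλ`.
On `(0, t^{-1/2})` the remainder is estimated trivially. On `(t^{-1/2}, ∞)` one writes
`ℰ′ = λ · (ℰ′/λ)` and integrates by parts once more, which gains another factor `1/t` at the
price of the boundary value at `t^{-1/2}`.
-/

open MeasureTheory Real Complex Set

noncomputable section

open Filter Topology

theorem HasCompactSupport.integrableOn_of_continuousOn {X F : Type*} [TopologicalSpace X]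
    [T2Space X] [MeasurableSpace X] [OpensMeasurableSpace X] {μ : Measure X}
    [IsFiniteMeasureOnCompacts μ] [NormedAddCommGroup F] {f : X → F} {s : Set X}
    (hf : HasCompactSupport f) (hs : IsClosed s) (hcont : ContinuousOn f s) :
    IntegrableOn f s μ :=
  ((hcont.mono inter_subset_right).integrableOn_compact (hf.inter_right hs)).of_forall_sdiff_eq_zero
    hs.measurableSet fun _ hx => image_eq_zero_of_notMem_tsupport fun h => hx.2 ⟨h, hx.1⟩

theorem HasCompactSupport.tendsto_atTop_zero {F : Type*} [Zero F] [TopologicalSpace F]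
    {f : ℝ → F} (hf : HasCompactSupport f) : Tendsto f atTop (𝓝 0) :=
  hf.is_zero_at_infty.mono_left atTop_le_cocompact

theorem norm_two_mul_I_mul_ofReal {t : ℝ} (ht : 0 ≤ t) : ‖2 * Complex.I * (t : ℂ)‖ = 2 * t := by
  simp [abs_of_nonneg ht]

def chirp (t l : ℝ) : ℂ := Complex.exp (Complex.I * t * l ^ 2)

section Chirp

variable (t : ℝ)

theorem norm_chirp (l : ℝ) : ‖chirp t l‖ = 1 := by
  rw [chirp, show Complex.I * t * (l : ℂ) ^ 2 = ((t * l ^ 2 : ℝ) : ℂ) * Complex.I by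
    push_cast; ring]
  exact Complex.norm_exp_ofReal_mul_I _

@[simp]
theorem chirp_zero : chirp t 0 = 1 := by simp [chirp]

@[fun_prop]
theorem continuous_chirp : Continuous (chirp t) := by
  unfold chirp; fun_prop

theorem hasDerivAt_chirp (l : ℝ) :
    HasDerivAt (chirp t) (2 * Complex.I * t * l * chirp t l) l := by
  refine (((hasDerivAt_pow 2 (l : ℂ)).const_mul (Complex.I * t)).cexp.comp_ofReal).congr_deriv ?_
  rw [chirp]
  push_cast
  ring

variable {t}

theorem MeasureTheory.IntegrableOn.chirp_mul {g : ℝ → ℂ} {s : Set ℝ} (hg : IntegrableOn g s) :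
    IntegrableOn (fun l => chirp t l * g l) s :=
  hg.bdd_mul (continuous_chirp t).aestronglyMeasurable
    (Eventually.of_forall fun l => (norm_chirp t l).le)

theorem integrableOn_Ioi_chirp_mul {a : ℝ} (ha : 0 < a) {g : ℝ → ℂ}
    (hg : ContinuousOn g (Ioi 0)) (hg_supp : HasCompactSupport g) :
    IntegrableOn (fun l => chirp t l * g l) (Ioi a) :=
  ((hg_supp.mul_left (f := chirp t)).integrableOn_of_continuousOn isClosed_Ici
    ((continuous_chirp t).continuousOn.mul
      (hg.mono fun _ hx => ha.trans_le hx.out))).mono_set Ioi_subset_Ici_self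

theorem norm_setIntegral_chirp_mul_le (g : ℝ → ℂ) (s : Set ℝ) :
    ‖∫ l in s, chirp t l * g l‖ ≤ ∫ l in s, ‖g l‖ := by
  simpa only [norm_mul, norm_chirp, one_mul] using
    norm_integral_le_integral_norm (μ := volume.restrict s) (fun l => chirp t l * g l)

theorem tendsto_chirp_mul_atTop_zero {f : ℝ → ℂ} (hf : Tendsto f atTop (𝓝 0)) :
    Tendsto (fun l => chirp t l * f l) atTop (𝓝 0) := by
  rw [tendsto_zero_iff_norm_tendsto_zero] at hf ⊢
  simpa only [norm_mul, norm_chirp, one_mul] using hf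

theorem integral_Ioi_chirp_mul_id_mul (ht : t ≠ 0) {a : ℝ} {f f' : ℝ → ℂ}
    (hfa : ContinuousWithinAt f (Ici a) a) (hf : ∀ x ∈ Ioi a, HasDerivAt f (f' x) x)
    (hf_top : Tendsto f atTop (𝓝 0))
    (h_int : IntegrableOn (fun l => chirp t l * l * f l) (Ioi a))
    (h'_int : IntegrableOn (fun l => chirp t l * f' l) (Ioi a)) :
    ∫ l in Ioi a, chirp t l * l * f l =
      -(chirp t a * f a + ∫ l in Ioi a, chirp t l * f' l) / (2 * Complex.I * t) := by
  have hderiv : ∀ x ∈ Ioi a, HasDerivAt (fun l => chirp t l * f l)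
      (2 * Complex.I * t * (chirp t x * x * f x) + chirp t x * f' x) x := fun x hx =>
    ((hasDerivAt_chirp t x).mul (hf x hx)).congr_deriv (by ring)
  have hFTC := integral_Ioi_of_hasDerivAt_of_tendsto
    ((continuous_chirp t).continuousWithinAt.mul hfa) hderiv
    ((h_int.const_mul _).add h'_int) (tendsto_chirp_mul_atTop_zero hf_top)
  rw [integral_add (h_int.const_mul _) h'_int, integral_const_mul, Pi.mul_apply] at hFTC
  have hc : 2 * Complex.I * t ≠ 0 := by simp [ht]
  rw [eq_div_iff hc]
  linear_combination hFTC

theorem integral_Ioi_zero_chirp_mul_id_mul_sub (ht : t ≠ 0) {E : ℝ → ℂ}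
    (hE0 : ContinuousWithinAt E (Ici 0) 0) (hE : DifferentiableOn ℝ E (Ioi 0))
    (hE_supp : HasCompactSupport E)
    (h_int : IntegrableOn (fun l => chirp t l * deriv E l) (Ioi 0)) :
    (∫ l in Ioi 0, chirp t l * l * E l) - Complex.I * E 0 / (2 * t) =
      -(∫ l in Ioi 0, chirp t l * deriv E l) / (2 * Complex.I * t) := by
  have hE_cont : ContinuousOn E (Ici 0) := by
    rintro x (hx : 0 ≤ x)
    rcases hx.eq_or_lt with rfl | hx
    · exact hE0
    · exact (hE.differentiableAt (Ioi_mem_nhds hx)).continuousAt.continuousWithinAt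
  have hE_int : IntegrableOn (fun l => chirp t l * l * E l) (Ioi 0) :=
    ((hE_supp.mul_left (f := fun l => chirp t l * l)).integrableOn_of_continuousOn isClosed_Ici
      (((continuous_chirp t).mul Complex.continuous_ofReal).continuousOn.mul hE_cont)).mono_set
      Ioi_subset_Ici_self
  rw [integral_Ioi_chirp_mul_id_mul ht hE0
    (fun x hx => (hE.differentiableAt (Ioi_mem_nhds hx)).hasDerivAt) hE_supp.tendsto_atTop_zero
    hE_int h_int, chirp_zero, one_mul]
  have : (t : ℂ) ≠ 0 := Complex.ofReal_ne_zero.mpr ht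
  field_simp
  linear_combination (-E 0) * Complex.I_sq

theorem norm_integral_Ioi_chirp_mul_le (ht : 0 < t) {a : ℝ} (ha : 0 < a) {g : ℝ → ℂ}
    (hg : DifferentiableOn ℝ g (Ioi 0)) (hg_supp : HasCompactSupport g)
    (h_int : IntegrableOn (deriv fun s => g s / s) (Ioi a)) :
    ‖∫ l in Ioi a, chirp t l * g l‖ ≤
      (‖g a‖ / a + ∫ l in Ioi a, ‖deriv (fun s => g s / s) l‖) / (2 * t) := by
  set h : ℝ → ℂ := fun s => g s / s
  have hh : ∀ x ∈ Ioi (0 : ℝ), DifferentiableAt ℝ h x := fun x hx =>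
    (hg.differentiableAt (Ioi_mem_nhds hx)).div Complex.ofRealCLM.differentiableAt
      (Complex.ofReal_ne_zero.mpr hx.out.ne')
  have hh_supp : HasCompactSupport h := hg_supp.mono fun x hx => by
    simp only [h, Function.mem_support, ne_eq, div_eq_zero_iff, not_or] at hx
    exact hx.1
  have h_eq : EqOn (fun l => chirp t l * g l) (fun l => chirp t l * l * h l) (Ioi a) :=
    fun l hl => by
      have : (l : ℂ) ≠ 0 := Complex.ofReal_ne_zero.mpr (ha.trans hl).ne'
      simp only [h]
      field_simp
  rw [setIntegral_congr_fun measurableSet_Ioi h_eq,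
    integral_Ioi_chirp_mul_id_mul ht.ne' (hh a ha).continuousAt.continuousWithinAt
      (fun x hx => (hh x (ha.trans hx)).hasDerivAt) hh_supp.tendsto_atTop_zero
      ((integrableOn_Ioi_chirp_mul ha hg.continuousOn hg_supp).congr_fun h_eq measurableSet_Ioi)
      h_int.chirp_mul,
    norm_div, norm_neg, norm_two_mul_I_mul_ofReal ht.le]
  have h_norm_a : ‖h a‖ = ‖g a‖ / a := by
    simp only [h, norm_div, Complex.norm_real, Real.norm_eq_abs, abs_of_pos ha]
  gcongr
  calc ‖chirp t a * h a + ∫ l in Ioi a, chirp t l * deriv h l‖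
      ≤ ‖chirp t a * h a‖ + ‖∫ l in Ioi a, chirp t l * deriv h l‖ := norm_add_le _ _
    _ ≤ ‖g a‖ / a + ∫ l in Ioi a, ‖deriv h l‖ := by
      rw [norm_mul, norm_chirp, one_mul, h_norm_a]
      gcongr
      exact norm_setIntegral_chirp_mul_le _ _

end Chirp

/-- Stationary phase estimate (Lemma `lem:ibp`): for `t > 2` and a compactly
supported amplitude `ℰ` which is continuous at `0` and `C²` on `(0,∞)`,
`|∫₀^∞ e^{itλ²} λ ℰ(λ) dλ − iℰ(0)/(2t)|` is bounded by
`C[ t⁻¹∫₀^{t^{-1/2}}|ℰ′| + |ℰ′(t^{-1/2})|/t^{3/2} + t⁻²∫_{t^{-1/2}}^∞ |(ℰ′(λ)/λ)′| dλ ]`,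
provided the right-hand side is finite. -/
theorem stationary_phase_boundary_term :
    ∃ C : ℝ, 0 < C ∧ ∀ E : ℝ → ℂ,
      ContinuousWithinAt E (Set.Ici 0) 0 →
      ContDiffOn ℝ 2 E (Set.Ioi 0) →
      HasCompactSupport E →
      ∀ t : ℝ, 2 < t →
        IntegrableOn (fun l : ℝ => deriv E l) (Set.Ioc 0 (t ^ (-(1:ℝ)/2))) →
        IntegrableOn (fun l : ℝ => deriv (fun s : ℝ => deriv E s / s) l)
          (Set.Ioi (t ^ (-(1:ℝ)/2))) →
        ‖(∫ l in Set.Ioi (0:ℝ), Complex.exp (Complex.I * t * l ^ 2) * l * E l) -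
            Complex.I * E 0 / (2 * t)‖ ≤
          C * ((1 / t) * (∫ l in Set.Ioc (0:ℝ) (t ^ (-(1:ℝ)/2)), ‖deriv E l‖) +
            ‖deriv E (t ^ (-(1:ℝ)/2))‖ / t ^ ((3:ℝ)/2) +
            (1 / t ^ 2) *
              ∫ l in Set.Ioi (t ^ (-(1:ℝ)/2)), ‖deriv (fun s : ℝ => deriv E s / s) l‖) := by
  refine ⟨1, one_pos, fun E hE0 hE2 hE_supp t ht h_int_near h_int_far => ?_⟩
  set a : ℝ := t ^ (-(1:ℝ)/2)
  have ht0 : 0 < t := by linarith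
  have ha : 0 < a := Real.rpow_pos_of_pos ht0 _
  have hE' : DifferentiableOn ℝ (deriv E) (Ioi 0) :=
    (hE2.deriv_of_isOpen (m := 1) isOpen_Ioi (by norm_num)).differentiableOn one_ne_zero
  have h_near := h_int_near.chirp_mul (t := t)
  have h_far := integrableOn_Ioi_chirp_mul (t := t) ha hE'.continuousOn hE_supp.deriv
  have h_pow : t ^ 2 * a = t ^ ((3:ℝ)/2) := by
    rw [← Real.rpow_natCast, ← Real.rpow_add ht0]
    norm_num
  change ‖(∫ l in Ioi 0, chirp t l * l * E l) - _‖ ≤ _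
  rw [integral_Ioi_zero_chirp_mul_id_mul_sub ht0.ne' hE0 (hE2.differentiableOn (by norm_num))
      hE_supp (Ioc_union_Ioi_eq_Ioi ha.le ▸ h_near.union h_far),
    ← Ioc_union_Ioi_eq_Ioi ha.le, setIntegral_union Ioc_disjoint_Ioi_same measurableSet_Ioi
      h_near h_far, norm_div, norm_neg, norm_two_mul_I_mul_ofReal ht0.le]
  set A := ∫ l in Ioc 0 a, ‖deriv E l‖
  set B := ‖deriv E a‖
  set D := ∫ l in Ioi a, ‖deriv (fun s : ℝ => deriv E s / s) l‖
  have hA : 0 ≤ A / t := by positivity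
  have hB : 0 ≤ B / t ^ ((3:ℝ)/2) := by positivity
  have hD : 0 ≤ D / t ^ 2 := by positivity
  calc ‖(∫ l in Ioc 0 a, chirp t l * deriv E l) + ∫ l in Ioi a, chirp t l * deriv E l‖ / (2 * t)
      ≤ (A + (B / a + D) / (2 * t)) / (2 * t) := by
        gcongr
        exact (norm_add_le _ _).trans (add_le_add (norm_setIntegral_chirp_mul_le _ _)
          (norm_integral_Ioi_chirp_mul_le ht0 ha hE' hE_supp.deriv h_int_far))
    _ = A / t / 2 + B / t ^ ((3:ℝ)/2) / 4 + D / t ^ 2 / 4 := by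
        rw [← h_pow]
        field_simp
        ring
    _ ≤ 1 * (1 / t * A + B / t ^ ((3:ℝ)/2) + 1 / t ^ 2 * D) := by
        rw [one_div_mul_eq_div, one_div_mul_eq_div]
        linarith
end
end

section
/- Let χ be a fixed smooth function on ℝ with χ(s) = 1 for |s| ≤ 1/2 and χ(s) = 0 for |s| ≥ 1, and set χ̃ = 1 − χ. Define J̃₀(s) = χ̃(s) J₀(s). Then there is a constant C (depending only on χ) such that for all λ > 0 and all z ∈ ℝ with z ≠ 0: |J̃₀(λ|z|)| ≤ C λ^{1/2} |z|^{1/2}, |∂_λ J̃₀(λ|z|)| ≤ C λ^{−1/2} |z|^{1/2}, and |∂_λ² J̃₀(λ|z|)| ≤ C λ^{−1/2} |z|^{3/2}. -/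
open MeasureTheory Real Set

noncomputable section

/-- The Bessel function of the first kind of order zero,
`J₀(z) = (1/π) ∫₀^π cos(z sin θ) dθ`. -/
def J0 (z : ℝ) : ℝ := (1 / Real.pi) * ∫ θ in (0:ℝ)..Real.pi, Real.cos (z * Real.sin θ)

open intervalIntegral

section Aux

lemma ibp_bound (φ Dφ g Dg : ℝ → ℝ) (c d : ℝ) (hcd : c ≤ d)
    (hφ : ∀ x ∈ Icc c d, HasDerivAt φ (Dφ x) x)
    (hg : ∀ x, HasDerivAt g (Dg x) x)
    (hDφc : ContinuousOn Dφ (Icc c d)) (hDgc : Continuous Dg)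
    (hDφ0 : ∀ x ∈ Icc c d, 0 ≤ Dφ x) (hgb : ∀ x, |g x| ≤ 1) :
    |∫ x in c..d, φ x * Dg x| ≤ 2 * |φ c| + 2 * |φ d| := by
  have huIcc : uIcc c d = Icc c d := uIcc_of_le hcd
  have hsub : Ioo (min c d) (max c d) ⊆ Icc c d := by
    rw [min_eq_left hcd, max_eq_right hcd]; exact Ioo_subset_Icc_self
  have hibp : ∫ x in c..d, φ x * Dg x
      = φ d * g d - φ c * g c - ∫ x in c..d, Dφ x * g x := by
    apply integral_mul_deriv_eq_deriv_mul_of_hasDerivAt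
    · exact fun x hx => (hφ x (huIcc ▸ hx)).continuousAt.continuousWithinAt
    · exact fun x _ => (hg x).continuousAt.continuousWithinAt
    · exact fun x hx => hφ x (hsub hx)
    · exact fun x _ => hg x
    · exact (huIcc ▸ hDφc).intervalIntegrable
    · exact hDgc.intervalIntegrable _ _
  have hint : |∫ x in c..d, Dφ x * g x| ≤ φ d - φ c := by
    have h1 : |∫ x in c..d, Dφ x * g x| ≤ |∫ x in c..d, Dφ x| := by
      rw [← Real.norm_eq_abs]
      apply intervalIntegral.norm_integral_le_abs_of_norm_le (by
        filter_upwards [ae_restrict_mem measurableSet_Ioc] with x hx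
        have hx' : x ∈ Icc c d := Ioc_subset_Icc_self ((uIoc_of_le hcd) ▸ hx)
        calc ‖Dφ x * g x‖ = |Dφ x| * |g x| := abs_mul _ _
          _ ≤ |Dφ x| * 1 := by gcongr; exact hgb x
          _ = Dφ x := by rw [mul_one, abs_of_nonneg (hDφ0 x hx')])
      exact (huIcc ▸ hDφc).intervalIntegrable
    have h1b : |∫ x in c..d, Dφ x| = ∫ x in c..d, Dφ x :=
      abs_of_nonneg (intervalIntegral.integral_nonneg hcd (fun x hx => hDφ0 x hx))
    have h2 : ∫ x in c..d, Dφ x = φ d - φ c :=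
      intervalIntegral.integral_eq_sub_of_hasDerivAt (fun x hx => hφ x (huIcc ▸ hx))
        (huIcc ▸ hDφc).intervalIntegrable
    linarith
  rw [hibp]
  have h3 : |φ d * g d| ≤ |φ d| := by
    rw [abs_mul]; nlinarith [abs_nonneg (φ d), abs_nonneg (g d), hgb d]
  have h4 : |φ c * g c| ≤ |φ c| := by
    rw [abs_mul]; nlinarith [abs_nonneg (φ c), abs_nonneg (g c), hgb c]
  have h5 : φ d - φ c ≤ |φ d| + |φ c| := by
    have := abs_nonneg (φ c); have := le_abs_self (φ d); have := neg_abs_le (φ c); linarith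
  calc |φ d * g d - φ c * g c - ∫ x in c..d, Dφ x * g x|
      ≤ |φ d * g d| + |φ c * g c| + |∫ x in c..d, Dφ x * g x| := by
        have := abs_sub (φ d * g d) (φ c * g c)
        calc |φ d * g d - φ c * g c - ∫ x in c..d, Dφ x * g x|
            ≤ |φ d * g d - φ c * g c| + |∫ x in c..d, Dφ x * g x| := abs_sub _ _
          _ ≤ |φ d * g d| + |φ c * g c| + |∫ x in c..d, Dφ x * g x| := by
              have := abs_sub (φ d * g d) (φ c * g c); linarith
    _ ≤ 2 * |φ c| + 2 * |φ d| := by linarith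

lemma osc_bound (S T : ℝ → ℝ)
    (hT : ∀ x, HasDerivAt T (S x) x) (hSc : Continuous S)
    (hTb : ∀ x, |T x| ≤ 1) (hSb : ∀ x, |S x| ≤ 1)
    (a φ Dφ : ℝ → ℝ) (hac : Continuous a) (hab : ∀ θ, |a θ| ≤ 1)
    (r : ℝ) (hr : 4 ≤ r)
    (hφd : ∀ θ, Real.cos θ ≠ 0 → HasDerivAt φ (Dφ θ) θ)
    (hDφc : ∀ θ, Real.cos θ ≠ 0 → ContinuousAt Dφ θ)
    (hDφ0 : ∀ θ ∈ Icc (0:ℝ) π, 0 ≤ Dφ θ)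
    (hφb : ∀ θ, Real.cos θ ≠ 0 → |φ θ| ≤ 1 / (r * |Real.cos θ|))
    (hrel : ∀ θ, Real.cos θ ≠ 0 →
      a θ * S (r * Real.sin θ) = φ θ * (r * Real.cos θ * S (r * Real.sin θ))) :
    |∫ θ in (0:ℝ)..π, a θ * S (r * Real.sin θ)| ≤ 12 * r ^ (-(1:ℝ)/2) := by
  have hr0 : (0:ℝ) < r := by linarith
  set δ : ℝ := r ^ (-(1:ℝ)/2) with hδ
  have hδpos : 0 < δ := Real.rpow_pos_of_pos hr0 _
  have h4half : (4:ℝ) ^ ((1:ℝ)/2) = 2 := by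
    rw [show (4:ℝ) = 2^(2:ℕ) by norm_num, ← Real.rpow_natCast 2 2,
      ← Real.rpow_mul (by norm_num)]
    norm_num
  have hrhalf : 2 ≤ r ^ ((1:ℝ)/2) := by
    calc (2:ℝ) = 4 ^ ((1:ℝ)/2) := h4half.symm
      _ ≤ r ^ ((1:ℝ)/2) := Real.rpow_le_rpow (by norm_num) hr (by norm_num)
  have hδinv : δ * r ^ ((1:ℝ)/2) = 1 := by
    rw [hδ, ← Real.rpow_add hr0]; norm_num
  have hδhalf : δ ≤ 1/2 := by
    nlinarith [hδpos]
  have hδlt : δ < π/2 := by nlinarith [pi_gt_three]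
  have hsinδ : δ/2 ≤ Real.sin δ := by
    have h := Real.mul_le_sin (x := δ) hδpos.le (by linarith)
    have h2 : 1/2 ≤ 2/π := by
      rw [div_le_div_iff₀ (by norm_num) pi_pos]; linarith [pi_le_four]
    nlinarith [mul_le_mul_of_nonneg_right h2 hδpos.le]
  have hsinδpos : 0 < Real.sin δ := by linarith
  have hrδ : r * δ = r ^ ((1:ℝ)/2) := by
    nth_rewrite 1 [← Real.rpow_one r]
    rw [hδ, ← Real.rpow_add hr0]; norm_num
  have hendbound : 1 / (r * Real.sin δ) ≤ 2 * δ := by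
    rw [div_le_iff₀ (by positivity)]
    have : r * δ * δ = 1 := by rw [hrδ, mul_comm, hδinv]
    nlinarith
  have h1r : 1 / r ≤ δ / 2 := by
    rw [div_le_div_iff₀ hr0 (by norm_num)]
    have hδδ : δ * δ * r = 1 := by
      rw [hδ, ← Real.rpow_add hr0,
        show (-1/2 + -1/2 : ℝ) = -1 by norm_num, Real.rpow_neg_one]
      field_simp
    nlinarith
  set b1 : ℝ := π/2 - δ with hb1
  set b2 : ℝ := π/2 + δ with hb2
  have hb10 : 0 ≤ b1 := by rw [hb1]; linarith
  have hb12 : b1 ≤ b2 := by rw [hb1, hb2]; linarith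
  have hb2π : b2 ≤ π := by rw [hb2]; linarith
  set f : ℝ → ℝ := fun θ => a θ * S (r * Real.sin θ) with hf
  have hfc : Continuous f := hac.mul (hSc.comp (continuous_const.mul Real.continuous_sin))
  set Dg : ℝ → ℝ := fun θ => r * Real.cos θ * S (r * Real.sin θ) with hDg
  have hDgc : Continuous Dg :=
    (continuous_const.mul Real.continuous_cos).mul
      (hSc.comp (continuous_const.mul Real.continuous_sin))
  set g : ℝ → ℝ := fun θ => T (r * Real.sin θ) with hg
  have hgd : ∀ x, HasDerivAt g (Dg x) x := by
    intro x
    have h1 : HasDerivAt (fun θ : ℝ => r * Real.sin θ) (r * Real.cos x) x :=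
      (Real.hasDerivAt_sin x).const_mul r
    have := (hT (r * Real.sin x)).comp x h1
    refine this.congr_deriv ?_; simp only [hDg]; ring
  have hgb : ∀ x, |g x| ≤ 1 := fun x => hTb _
  -- cos nonzero facts
  have hcos1 : ∀ θ ∈ Icc (0:ℝ) b1, 0 < Real.cos θ := by
    intro θ hθ
    apply Real.cos_pos_of_mem_Ioo
    constructor
    · linarith [hθ.1, pi_pos]
    · have := hθ.2; rw [hb1] at this; linarith
  have hcos2 : ∀ θ ∈ Icc b2 π, Real.cos θ < 0 := by
    intro θ hθ
    apply Real.cos_neg_of_pi_div_two_lt_of_lt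
    · have := hθ.1; rw [hb2] at this; linarith
    · linarith [hθ.2, pi_pos]
  -- split
  have hsplit : ∫ θ in (0:ℝ)..π, f θ =
      (∫ θ in (0:ℝ)..b1, f θ) + (∫ θ in b1..b2, f θ) + (∫ θ in b2..π, f θ) := by
    rw [integral_add_adjacent_intervals (hfc.intervalIntegrable _ _) (hfc.intervalIntegrable _ _),
      integral_add_adjacent_intervals (hfc.intervalIntegrable _ _) (hfc.intervalIntegrable _ _)]
  -- middle piece
  have hmid : |∫ θ in b1..b2, f θ| ≤ 2 * δ := by
    have := intervalIntegral.norm_integral_le_of_norm_le_const (C := 1)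
      (f := f) (a := b1) (b := b2) (by
        intro x _
        have := hab x; have := hSb (r * Real.sin x)
        calc ‖f x‖ = |a x| * |S (r * Real.sin x)| := abs_mul _ _
          _ ≤ 1 * 1 := by gcongr <;> assumption
          _ = 1 := by norm_num)
    rw [Real.norm_eq_abs] at this
    calc |∫ θ in b1..b2, f θ| ≤ 1 * |b2 - b1| := this
      _ = 2 * δ := by rw [hb1, hb2]; rw [abs_of_nonneg (by linarith)]; ring
  -- left piece
  have hleft : |∫ θ in (0:ℝ)..b1, f θ| ≤ 5 * δ := by
    have hco : ∀ θ ∈ Icc (0:ℝ) b1, Real.cos θ ≠ 0 := fun θ hθ => (hcos1 θ hθ).ne'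
    have hcongr : ∫ θ in (0:ℝ)..b1, f θ = ∫ θ in (0:ℝ)..b1, φ θ * Dg θ := by
      apply intervalIntegral.integral_congr
      intro θ hθ
      rw [uIcc_of_le hb10] at hθ
      exact hrel θ (hco θ hθ)
    rw [hcongr]
    have hibp := ibp_bound φ Dφ g Dg 0 b1 hb10
      (fun x hx => hφd x (hco x hx)) hgd
      (fun x hx => ((hDφc x (hco x hx)).continuousWithinAt))
      hDgc
      (fun x hx => hDφ0 x ⟨hx.1, hx.2.trans (by rw [hb1]; linarith)⟩)
      hgb
    have hφ0 : |φ 0| ≤ δ/2 := by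
      have := hφb 0 (by rw [Real.cos_zero]; norm_num)
      rw [Real.cos_zero] at this; simp at this
      calc |φ 0| ≤ 1/r := by simpa using this
        _ ≤ δ/2 := h1r
    have hφb1 : |φ b1| ≤ 2 * δ := by
      have hcb1 : Real.cos b1 = Real.sin δ := by rw [hb1, Real.cos_pi_div_two_sub]
      have := hφb b1 (by rw [hcb1]; exact hsinδpos.ne')
      rw [hcb1, abs_of_pos hsinδpos] at this
      exact this.trans hendbound
    calc |∫ x in (0:ℝ)..b1, φ x * Dg x| ≤ 2 * |φ 0| + 2 * |φ b1| := hibp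
      _ ≤ 2 * (δ/2) + 2 * (2*δ) := by gcongr
      _ = 5 * δ := by ring
  -- right piece
  have hright : |∫ θ in b2..π, f θ| ≤ 5 * δ := by
    have hco : ∀ θ ∈ Icc b2 π, Real.cos θ ≠ 0 := fun θ hθ => (hcos2 θ hθ).ne
    have hcongr : ∫ θ in b2..π, f θ = ∫ θ in b2..π, φ θ * Dg θ := by
      apply intervalIntegral.integral_congr
      intro θ hθ
      rw [uIcc_of_le hb2π] at hθ
      exact hrel θ (hco θ hθ)
    rw [hcongr]
    have hibp := ibp_bound φ Dφ g Dg b2 π hb2π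
      (fun x hx => hφd x (hco x hx)) hgd
      (fun x hx => ((hDφc x (hco x hx)).continuousWithinAt))
      hDgc
      (fun x hx => hDφ0 x ⟨le_trans (by rw [hb2]; linarith) hx.1, hx.2⟩)
      hgb
    have hφπ : |φ π| ≤ δ/2 := by
      have := hφb π (by rw [Real.cos_pi]; norm_num)
      rw [Real.cos_pi] at this; simp at this
      calc |φ π| ≤ 1/r := by simpa using this
        _ ≤ δ/2 := h1r
    have hφb2 : |φ b2| ≤ 2 * δ := by
      have hcb2 : Real.cos b2 = -Real.sin δ := by
        rw [hb2, Real.cos_add, Real.cos_pi_div_two, Real.sin_pi_div_two]; ring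
      have := hφb b2 (by rw [hcb2]; simpa using hsinδpos.ne')
      rw [hcb2, abs_neg, abs_of_pos hsinδpos] at this
      exact this.trans hendbound
    calc |∫ x in b2..π, φ x * Dg x| ≤ 2 * |φ b2| + 2 * |φ π| := hibp
      _ ≤ 2 * (2*δ) + 2 * (δ/2) := by gcongr
      _ = 5 * δ := by ring
  calc |∫ θ in (0:ℝ)..π, f θ|
      ≤ |∫ θ in (0:ℝ)..b1, f θ| + |∫ θ in b1..b2, f θ| + |∫ θ in b2..π, f θ| := by
        rw [hsplit]; exact (abs_add_le _ _).trans (by gcongr; exact abs_add_le _ _)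
    _ ≤ 5*δ + 2*δ + 5*δ := by gcongr
    _ = 12 * δ := by ring

lemma rpow_half_ge {r : ℝ} (hr : 1/4 ≤ r) : 1/2 ≤ r ^ ((1:ℝ)/2) := by
  have h14 : ((1:ℝ)/4) ^ ((1:ℝ)/2) = 1/2 := by
    rw [show (1:ℝ)/4 = (1/2)^(2:ℕ) by norm_num, ← Real.rpow_natCast ((1:ℝ)/2) 2,
      ← Real.rpow_mul (by norm_num)]
    norm_num
  calc (1:ℝ)/2 = ((1:ℝ)/4) ^ ((1:ℝ)/2) := h14.symm
    _ ≤ r ^ ((1:ℝ)/2) := Real.rpow_le_rpow (by norm_num) hr (by norm_num)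

/-- wrapper: bound for all `r ≥ 1/2`, from the `r ≥ 4` case plus a trivial bound. -/
lemma osc_bound' (S T : ℝ → ℝ)
    (hT : ∀ x, HasDerivAt T (S x) x) (hSc : Continuous S)
    (hTb : ∀ x, |T x| ≤ 1) (hSb : ∀ x, |S x| ≤ 1)
    (a : ℝ → ℝ) (hac : Continuous a) (hab : ∀ θ, |a θ| ≤ 1)
    (r : ℝ) (hr : 1/2 ≤ r)
    (φ Dφ : ℝ → ℝ)
    (hφd : ∀ θ, Real.cos θ ≠ 0 → HasDerivAt φ (Dφ θ) θ)
    (hDφc : ∀ θ, Real.cos θ ≠ 0 → ContinuousAt Dφ θ)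
    (hDφ0 : ∀ θ ∈ Icc (0:ℝ) π, 0 ≤ Dφ θ)
    (hφb : ∀ θ, Real.cos θ ≠ 0 → |φ θ| ≤ 1 / (r * |Real.cos θ|))
    (hrel : ∀ θ, Real.cos θ ≠ 0 →
      a θ * S (r * Real.sin θ) = φ θ * (r * Real.cos θ * S (r * Real.sin θ))) :
    |∫ θ in (0:ℝ)..π, a θ * S (r * Real.sin θ)| ≤ 12 * r ^ (-(1:ℝ)/2) := by
  rcases le_or_gt 4 r with h4 | h4
  · exact osc_bound S T hT hSc hTb hSb a φ Dφ hac hab r h4 hφd hDφc hDφ0 hφb hrel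
  · -- trivial bound
    have hr0 : (0:ℝ) < r := by linarith
    have hrhalfle : r ^ ((1:ℝ)/2) ≤ 2 := by
      have h4half : (4:ℝ) ^ ((1:ℝ)/2) = 2 := by
        rw [show (4:ℝ) = 2^(2:ℕ) by norm_num, ← Real.rpow_natCast 2 2,
          ← Real.rpow_mul (by norm_num)]
        norm_num
      calc r ^ ((1:ℝ)/2) ≤ 4 ^ ((1:ℝ)/2) :=
            Real.rpow_le_rpow hr0.le h4.le (by norm_num)
        _ = 2 := h4half
    have hxpos : 0 < r ^ ((1:ℝ)/2) := Real.rpow_pos_of_pos hr0 _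
    have hinv : r ^ (-(1:ℝ)/2) * r ^ ((1:ℝ)/2) = 1 := by
      rw [← Real.rpow_add hr0]; norm_num
    have hge : 1/2 ≤ r ^ (-(1:ℝ)/2) := by nlinarith
    have hb : ∀ x ∈ Set.uIoc (0:ℝ) π, ‖a x * S (r * Real.sin x)‖ ≤ 1 := by
      intro x _
      calc ‖a x * S (r * Real.sin x)‖ = |a x| * |S (r * Real.sin x)| := abs_mul _ _
        _ ≤ 1 * 1 := mul_le_mul (hab x) (hSb _) (abs_nonneg _) zero_le_one
        _ = 1 := by norm_num
    have := intervalIntegral.norm_integral_le_of_norm_le_const (C := 1) hb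
    rw [Real.norm_eq_abs] at this
    calc |∫ θ in (0:ℝ)..π, a θ * S (r * Real.sin θ)| ≤ 1 * |π - 0| := this
      _ = π := by rw [abs_of_nonneg (by simp [pi_pos.le])]; ring
      _ ≤ 12 * r ^ (-(1:ℝ)/2) := by nlinarith [pi_le_four]

/-- minus the derivative integrand: `J1 = J0` derivative of `J0`. -/
def J1 (z : ℝ) : ℝ := -(1 / Real.pi) * ∫ θ in (0:ℝ)..Real.pi,
  Real.sin θ * Real.sin (z * Real.sin θ)

def J2 (z : ℝ) : ℝ := -(1 / Real.pi) * ∫ θ in (0:ℝ)..Real.pi,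
  Real.sin θ ^ 2 * Real.cos (z * Real.sin θ)

lemma abs_sin_le_one' (x : ℝ) : |Real.sin x| ≤ 1 := abs_le.mpr ⟨Real.neg_one_le_sin x, Real.sin_le_one x⟩
lemma abs_cos_le_one' (x : ℝ) : |Real.cos x| ≤ 1 := abs_le.mpr ⟨Real.neg_one_le_cos x, Real.cos_le_one x⟩

lemma J0_decay {r : ℝ} (hr : 1/2 ≤ r) : |J0 r| ≤ 12 * r ^ (-(1:ℝ)/2) := by
  have hr0 : (0:ℝ) < r := by linarith
  have hosc := osc_bound' Real.cos Real.sin Real.hasDerivAt_sin Real.continuous_cos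
    abs_sin_le_one' abs_cos_le_one' (fun _ => (1:ℝ)) continuous_const (by intro θ; norm_num)
    r hr (fun θ => (r * Real.cos θ)⁻¹) (fun θ => Real.sin θ / (r * Real.cos θ ^ 2))
    (by
      intro θ hθ
      have h := ((Real.hasDerivAt_cos θ).const_mul r).inv (mul_ne_zero hr0.ne' hθ)
      refine h.congr_deriv ?_
      field_simp)
    (by
      intro θ hθ
      exact ContinuousAt.div Real.continuous_sin.continuousAt
        ((continuous_const.mul (Real.continuous_cos.pow 2)).continuousAt)
        (mul_ne_zero hr0.ne' (pow_ne_zero 2 hθ)))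
    (by
      intro θ hθ
      exact div_nonneg (Real.sin_nonneg_of_nonneg_of_le_pi hθ.1 hθ.2) (by positivity))
    (by
      intro θ hθ
      rw [abs_inv, abs_mul, abs_of_pos hr0, one_div])
    (by
      intro θ hθ
      rw [one_mul, inv_mul_cancel_left₀ (mul_ne_zero hr0.ne' hθ)])
  simp only [one_mul] at hosc
  have hπ1 : |1 / π| ≤ 1 := by
    rw [abs_of_pos (by positivity)]
    rw [div_le_one pi_pos]
    linarith [pi_gt_three]
  calc |J0 r| = |1/π| * |∫ θ in (0:ℝ)..π, Real.cos (r * Real.sin θ)| := abs_mul _ _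
    _ ≤ 1 * (12 * r ^ (-(1:ℝ)/2)) := mul_le_mul hπ1 hosc (abs_nonneg _) zero_le_one
    _ = 12 * r ^ (-(1:ℝ)/2) := by ring

lemma J1_decay {r : ℝ} (hr : 1/2 ≤ r) : |J1 r| ≤ 12 * r ^ (-(1:ℝ)/2) := by
  have hr0 : (0:ℝ) < r := by linarith
  have hosc := osc_bound' Real.sin (fun x => -Real.cos x)
    (fun x => (Real.hasDerivAt_cos x).neg.congr_deriv (neg_neg _)) Real.continuous_sin
    (fun x => by rw [abs_neg]; exact abs_cos_le_one' x) abs_sin_le_one'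
    Real.sin Real.continuous_sin abs_sin_le_one'
    r hr (fun θ => Real.sin θ * (r * Real.cos θ)⁻¹)
    (fun θ => (Real.cos θ ^ 2 + Real.sin θ ^ 2) * (r * Real.cos θ ^ 2)⁻¹)
    (by
      intro θ hθ
      have h := (Real.hasDerivAt_sin θ).mul
        (((Real.hasDerivAt_cos θ).const_mul r).inv (mul_ne_zero hr0.ne' hθ))
      refine h.congr_deriv ?_
      simp only [Pi.inv_apply, Pi.pow_apply]
      field_simp)
    (by
      intro θ hθ
      exact ContinuousAt.mul
        ((Real.continuous_cos.pow 2).add (Real.continuous_sin.pow 2)).continuousAt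
        (ContinuousAt.inv₀ (continuous_const.mul (Real.continuous_cos.pow 2)).continuousAt
          (mul_ne_zero hr0.ne' (pow_ne_zero 2 hθ))))
    (by
      intro θ hθ
      have : (0:ℝ) ≤ Real.cos θ ^ 2 + Real.sin θ ^ 2 := by positivity
      positivity)
    (by
      intro θ hθ
      rw [abs_mul, abs_inv, abs_mul, abs_of_pos hr0, one_div]
      calc |Real.sin θ| * (r * |Real.cos θ|)⁻¹ ≤ 1 * (r * |Real.cos θ|)⁻¹ := by
            gcongr; exact abs_sin_le_one' θ
        _ = (r * |Real.cos θ|)⁻¹ := one_mul _)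
    (by
      intro θ hθ
      field_simp)
  have hπ1 : |-(1 / π)| ≤ 1 := by
    rw [abs_neg, abs_of_pos (by positivity), div_le_one pi_pos]
    linarith [pi_gt_three]
  calc |J1 r| = |-(1/π)| * |∫ θ in (0:ℝ)..π, Real.sin θ * Real.sin (r * Real.sin θ)| :=
        abs_mul _ _
    _ ≤ 1 * (12 * r ^ (-(1:ℝ)/2)) := mul_le_mul hπ1 hosc (abs_nonneg _) zero_le_one
    _ = 12 * r ^ (-(1:ℝ)/2) := by ring

lemma J2_decay {r : ℝ} (hr : 1/2 ≤ r) : |J2 r| ≤ 12 * r ^ (-(1:ℝ)/2) := by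
  have hr0 : (0:ℝ) < r := by linarith
  have hosc := osc_bound' Real.cos Real.sin Real.hasDerivAt_sin Real.continuous_cos
    abs_sin_le_one' abs_cos_le_one'
    (fun θ => Real.sin θ ^ 2) (Real.continuous_sin.pow 2)
    (by
      intro θ
      rw [abs_pow]
      calc |Real.sin θ| ^ 2 ≤ 1 ^ 2 := by gcongr; exact abs_sin_le_one' θ
        _ = 1 := one_pow 2)
    r hr (fun θ => Real.sin θ ^ 2 * (r * Real.cos θ)⁻¹)
    (fun θ => (2 * Real.sin θ * Real.cos θ ^ 2 + Real.sin θ ^ 3) * (r * Real.cos θ ^ 2)⁻¹)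
    (by
      intro θ hθ
      have h := ((Real.hasDerivAt_sin θ).pow 2).mul
        (((Real.hasDerivAt_cos θ).const_mul r).inv (mul_ne_zero hr0.ne' hθ))
      refine h.congr_deriv ?_
      simp only [Pi.inv_apply, Pi.pow_apply]
      field_simp
      ring)
    (by
      intro θ hθ
      exact ContinuousAt.mul
        (((continuous_const.mul Real.continuous_sin).mul (Real.continuous_cos.pow 2)).add
          (Real.continuous_sin.pow 3)).continuousAt
        (ContinuousAt.inv₀ (continuous_const.mul (Real.continuous_cos.pow 2)).continuousAt
          (mul_ne_zero hr0.ne' (pow_ne_zero 2 hθ))))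
    (by
      intro θ hθ
      have hs : 0 ≤ Real.sin θ := Real.sin_nonneg_of_nonneg_of_le_pi hθ.1 hθ.2
      apply mul_nonneg
      · nlinarith [sq_nonneg (Real.cos θ), sq_nonneg (Real.sin θ)]
      · positivity)
    (by
      intro θ hθ
      rw [abs_mul, abs_inv, abs_mul, abs_of_pos hr0, one_div, abs_pow]
      calc |Real.sin θ| ^ 2 * (r * |Real.cos θ|)⁻¹ ≤ 1 ^ 2 * (r * |Real.cos θ|)⁻¹ := by
            gcongr; exact abs_sin_le_one' θ
        _ = (r * |Real.cos θ|)⁻¹ := by rw [one_pow, one_mul])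
    (by
      intro θ hθ
      field_simp)
  have hπ1 : |-(1 / π)| ≤ 1 := by
    rw [abs_neg, abs_of_pos (by positivity), div_le_one pi_pos]
    linarith [pi_gt_three]
  calc |J2 r| = |-(1/π)| * |∫ θ in (0:ℝ)..π, Real.sin θ ^ 2 * Real.cos (r * Real.sin θ)| :=
        abs_mul _ _
    _ ≤ 1 * (12 * r ^ (-(1:ℝ)/2)) := mul_le_mul hπ1 hosc (abs_nonneg _) zero_le_one
    _ = 12 * r ^ (-(1:ℝ)/2) := by ring

lemma J0_abs_le_one (r : ℝ) : |J0 r| ≤ 1 := by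
  have hb : ∀ x ∈ Set.uIoc (0:ℝ) π, ‖Real.cos (r * Real.sin x)‖ ≤ 1 := fun x _ => abs_cos_le_one' _
  have h := intervalIntegral.norm_integral_le_of_norm_le_const (C := 1) hb
  rw [Real.norm_eq_abs] at h
  have hπ : |π - 0| = π := by rw [sub_zero, abs_of_pos pi_pos]
  rw [hπ, one_mul] at h
  calc |J0 r| = |1/π| * |∫ θ in (0:ℝ)..π, Real.cos (r * Real.sin θ)| := abs_mul _ _
    _ ≤ |1/π| * π := by gcongr
    _ = 1 := by rw [abs_of_pos (by positivity)]; field_simp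

lemma hasDerivAt_J0 (x₀ : ℝ) : HasDerivAt J0 (J1 x₀) x₀ := by
  have key := intervalIntegral.hasDerivAt_integral_of_dominated_loc_of_deriv_le
    (μ := volume) (F := fun x θ => Real.cos (x * Real.sin θ))
    (F' := fun x θ => -(Real.sin θ * Real.sin (x * Real.sin θ)))
    (x₀ := x₀) (bound := fun _ => 1) (a := 0) (b := π) (s := Metric.ball x₀ 1) (Metric.ball_mem_nhds x₀ one_pos)
    (Filter.Eventually.of_forall fun x =>
      (Real.continuous_cos.comp (continuous_const.mul Real.continuous_sin)).aestronglyMeasurable)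
    ((Real.continuous_cos.comp (continuous_const.mul Real.continuous_sin)).intervalIntegrable _ _)
    ((((Real.continuous_sin.mul (Real.continuous_sin.comp
      (continuous_const.mul Real.continuous_sin)))).neg).aestronglyMeasurable)
    (Filter.Eventually.of_forall fun θ _ x _ => by
      rw [Real.norm_eq_abs, abs_neg, abs_mul]
      calc |Real.sin θ| * |Real.sin (x * Real.sin θ)| ≤ 1 * 1 :=
            mul_le_mul (abs_sin_le_one' _) (abs_sin_le_one' _) (abs_nonneg _) zero_le_one
        _ = 1 := by norm_num)
    (intervalIntegrable_const)
    (Filter.Eventually.of_forall fun θ _ x _ => by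
      have h := (hasDerivAt_mul_const (c := Real.sin θ) (x := x)).cos
      refine h.congr_deriv ?_
      ring)
  have h2 := key.2.const_mul (1/π)
  have : (1/π) * ∫ θ in (0:ℝ)..π, -(Real.sin θ * Real.sin (x₀ * Real.sin θ)) = J1 x₀ := by
    rw [intervalIntegral.integral_neg, J1]; ring
  rw [this] at h2
  exact h2

lemma hasDerivAt_J1 (x₀ : ℝ) : HasDerivAt J1 (J2 x₀) x₀ := by
  have key := intervalIntegral.hasDerivAt_integral_of_dominated_loc_of_deriv_le
    (μ := volume) (F := fun x θ => Real.sin θ * Real.sin (x * Real.sin θ))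
    (F' := fun x θ => Real.sin θ ^ 2 * Real.cos (x * Real.sin θ))
    (x₀ := x₀) (bound := fun _ => 1) (a := 0) (b := π) (s := Metric.ball x₀ 1) (Metric.ball_mem_nhds x₀ one_pos)
    (Filter.Eventually.of_forall fun x =>
      (Real.continuous_sin.mul (Real.continuous_sin.comp
        (continuous_const.mul Real.continuous_sin))).aestronglyMeasurable)
    ((Real.continuous_sin.mul (Real.continuous_sin.comp
      (continuous_const.mul Real.continuous_sin))).intervalIntegrable _ _)
    (((Real.continuous_sin.pow 2).mul (Real.continuous_cos.comp
      (continuous_const.mul Real.continuous_sin))).aestronglyMeasurable)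
    (Filter.Eventually.of_forall fun θ _ x _ => by
      rw [Real.norm_eq_abs, abs_mul, abs_pow]
      calc |Real.sin θ| ^ 2 * |Real.cos (x * Real.sin θ)| ≤ 1 ^ 2 * 1 := by
            gcongr <;> [exact abs_sin_le_one' _; exact abs_cos_le_one' _]
        _ = 1 := by norm_num)
    (intervalIntegrable_const)
    (Filter.Eventually.of_forall fun θ _ x _ => by
      have h := ((hasDerivAt_mul_const (c := Real.sin θ) (x := x)).sin).const_mul (Real.sin θ)
      refine h.congr_deriv ?_
      ring)
  have h2 := key.2.const_mul (-(1/π))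
  have : (-(1/π)) * ∫ θ in (0:ℝ)..π, Real.sin θ ^ 2 * Real.cos (x₀ * Real.sin θ) = J2 x₀ := by
    rw [J2]
  rw [this] at h2
  exact h2

end Aux

/-- Bounds on the high-energy part `J̃₀ = (1-χ)J₀` of the Bessel function:
`|J̃₀(λ|z|)| ≲ λ^{1/2}|z|^{1/2}`, `|∂_λ J̃₀(λ|z|)| ≲ λ^{-1/2}|z|^{1/2}`,
`|∂_λ² J̃₀(λ|z|)| ≲ λ^{-1/2}|z|^{3/2}`. -/
theorem high_energy_J0_bounds
    (χ : ℝ → ℝ) (hχ : ContDiff ℝ (⊤ : ℕ∞) χ)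
    (hχ1 : ∀ s : ℝ, |s| ≤ 1 / 2 → χ s = 1)
    (hχ0 : ∀ s : ℝ, 1 ≤ |s| → χ s = 0) :
    ∃ C : ℝ, 0 < C ∧ ∀ l : ℝ, 0 < l → ∀ z : ℝ, z ≠ 0 →
      |(1 - χ (l * |z|)) * J0 (l * |z|)| ≤ C * l ^ ((1:ℝ)/2) * |z| ^ ((1:ℝ)/2) ∧
      |deriv (fun s : ℝ => (1 - χ (s * |z|)) * J0 (s * |z|)) l| ≤
        C * l ^ (-(1:ℝ)/2) * |z| ^ ((1:ℝ)/2) ∧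
      |iteratedDeriv 2 (fun s : ℝ => (1 - χ (s * |z|)) * J0 (s * |z|)) l| ≤
        C * l ^ (-(1:ℝ)/2) * |z| ^ ((3:ℝ)/2) := by
  classical
  set χ₁ := deriv χ with hχ₁def
  set χ₂ := deriv χ₁ with hχ₂def
  have hχT : ContDiff ℝ ((⊤:ℕ∞):WithTop ℕ∞) χ := hχ.of_le (by simp)
  have hχdiff : Differentiable ℝ χ := hχT.differentiable (by simp)
  have hχ₁smooth : ContDiff ℝ ((⊤:ℕ∞):WithTop ℕ∞) χ₁ := (contDiff_infty_iff_deriv.mp hχT).2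
  have hχ₁diff : Differentiable ℝ χ₁ := hχ₁smooth.differentiable (by simp)
  have hχ₂cont : Continuous χ₂ := ((contDiff_infty_iff_deriv.mp hχ₁smooth).2).continuous
  have hopen : IsOpen {x : ℝ | 1 < |x|} := isOpen_lt continuous_const continuous_abs
  have hzero1 : ∀ s : ℝ, 1 < |s| → χ₁ s = 0 := by
    intro s hs
    have hev : χ =ᶠ[nhds s] fun _ => (0:ℝ) := by
      filter_upwards [hopen.mem_nhds hs] with x hx using hχ0 x hx.le
    rw [hχ₁def, hev.deriv_eq, deriv_const]
  have hzero2 : ∀ s : ℝ, 1 < |s| → χ₂ s = 0 := by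
    intro s hs
    have hev : χ₁ =ᶠ[nhds s] fun _ => (0:ℝ) := by
      filter_upwards [hopen.mem_nhds hs] with x hx using hzero1 x hx
    rw [hχ₂def, hev.deriv_eq, deriv_const]
  -- global bounds
  obtain ⟨B₀, hB₀⟩ := (isCompact_Icc (a := (-1:ℝ)) (b := 1)).exists_bound_of_continuousOn
    hχ.continuous.continuousOn
  obtain ⟨B₁, hB₁⟩ := (isCompact_Icc (a := (-1:ℝ)) (b := 1)).exists_bound_of_continuousOn
    hχ₁smooth.continuous.continuousOn
  obtain ⟨B₂, hB₂⟩ := (isCompact_Icc (a := (-1:ℝ)) (b := 1)).exists_bound_of_continuousOn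
    hχ₂cont.continuousOn
  set M : ℝ := 1 + max B₀ 0 + max B₁ 0 + max B₂ 0 with hMdef
  have hM1 : 1 ≤ M := by
    have := le_max_right B₀ (0:ℝ); have := le_max_right B₁ (0:ℝ)
    have := le_max_right B₂ (0:ℝ); simp only [hMdef]; linarith
  have hM0 : 0 ≤ M := by linarith
  have hb0 : ∀ s : ℝ, |1 - χ s| ≤ M := by
    intro s
    have hχb : |χ s| ≤ max B₀ 0 := by
      rcases le_or_gt |s| 1 with h | h
      · exact le_trans (hB₀ s (abs_le.mp h)) (le_max_left _ _)
      · rw [hχ0 s h.le]; simpa using le_max_right B₀ (0:ℝ)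
    calc |1 - χ s| ≤ |(1:ℝ)| + |χ s| := abs_sub _ _
      _ ≤ 1 + max B₀ 0 := by rw [abs_one]; linarith
      _ ≤ M := by
          have := le_max_right B₁ (0:ℝ); have := le_max_right B₂ (0:ℝ)
          simp only [hMdef]; linarith
  have hb1 : ∀ s : ℝ, |χ₁ s| ≤ M := by
    intro s
    have hχb : |χ₁ s| ≤ max B₁ 0 := by
      rcases le_or_gt |s| 1 with h | h
      · exact le_trans (hB₁ s (abs_le.mp h)) (le_max_left _ _)
      · rw [hzero1 s h]; simpa using le_max_right B₁ (0:ℝ)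
    refine hχb.trans ?_
    have := le_max_right B₀ (0:ℝ); have := le_max_right B₂ (0:ℝ)
    simp only [hMdef]; linarith
  have hb2 : ∀ s : ℝ, |χ₂ s| ≤ M := by
    intro s
    have hχb : |χ₂ s| ≤ max B₂ 0 := by
      rcases le_or_gt |s| 1 with h | h
      · exact le_trans (hB₂ s (abs_le.mp h)) (le_max_left _ _)
      · rw [hzero2 s h]; simpa using le_max_right B₂ (0:ℝ)
    refine hχb.trans ?_
    have := le_max_right B₀ (0:ℝ); have := le_max_right B₁ (0:ℝ)
    simp only [hMdef]; linarith
  refine ⟨48 * M, by linarith, ?_⟩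
  intro l hl z hz
  set w : ℝ := |z| with hwdef
  have hw : 0 < w := abs_pos.mpr hz
  have hr0 : 0 < l * w := mul_pos hl hw
  -- derivative machinery
  set F₁ : ℝ → ℝ := fun s =>
    w * (-(χ₁ (s*w)) * J0 (s*w) + (1 - χ (s*w)) * J1 (s*w)) with hF₁def
  set F₂ : ℝ → ℝ := fun s =>
    w^2 * (-(χ₂ (s*w)) * J0 (s*w) - 2*(χ₁ (s*w)) * J1 (s*w) + (1 - χ (s*w)) * J2 (s*w))
    with hF₂def
  have hsw : ∀ s : ℝ, HasDerivAt (fun u : ℝ => u * w) w s :=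
    fun s => hasDerivAt_mul_const w
  have hχc : ∀ s : ℝ, HasDerivAt (fun u : ℝ => 1 - χ (u*w)) (-(χ₁ (s*w) * w)) s := by
    intro s
    exact (((hχdiff (s*w)).hasDerivAt).comp s (hsw s)).const_sub 1
  have hχ₁c : ∀ s : ℝ, HasDerivAt (fun u : ℝ => χ₁ (u*w)) (χ₂ (s*w) * w) s := by
    intro s
    exact ((hχ₁diff (s*w)).hasDerivAt).comp s (hsw s)
  have hJ0c : ∀ s : ℝ, HasDerivAt (fun u : ℝ => J0 (u*w)) (J1 (s*w) * w) s :=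
    fun s => by have := (hasDerivAt_J0 (s*w)).comp s (hsw s); exact this
  have hJ1c : ∀ s : ℝ, HasDerivAt (fun u : ℝ => J1 (u*w)) (J2 (s*w) * w) s :=
    fun s => by have := (hasDerivAt_J1 (s*w)).comp s (hsw s); exact this
  have hF : ∀ s : ℝ, HasDerivAt (fun u : ℝ => (1 - χ (u * w)) * J0 (u * w)) (F₁ s) s := by
    intro s
    have := (hχc s).mul (hJ0c s)
    refine this.congr_deriv ?_
    simp only [hF₁def]; ring
  have hF₁ : ∀ s : ℝ, HasDerivAt F₁ (F₂ s) s := by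
    intro s
    have h := ((((hχ₁c s).neg).mul (hJ0c s)).add ((hχc s).mul (hJ1c s))).const_mul w
    refine h.congr_deriv ?_
    simp only [hF₂def, Pi.neg_apply]; ring
  have hderivF : deriv (fun u : ℝ => (1 - χ (u * w)) * J0 (u * w)) = F₁ :=
    funext fun s => (hF s).deriv
  have hiter : iteratedDeriv 2 (fun u : ℝ => (1 - χ (u * w)) * J0 (u * w))
      = deriv F₁ := by
    rw [iteratedDeriv_succ, iteratedDeriv_one, hderivF]
  -- rpow identities
  have hA : l ^ ((1:ℝ)/2) * w ^ ((1:ℝ)/2) = (l*w) ^ ((1:ℝ)/2) :=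
    (Real.mul_rpow hl.le hw.le).symm
  have hwhalf : w * w ^ (-(1:ℝ)/2) = w ^ ((1:ℝ)/2) := by
    nth_rewrite 1 [← Real.rpow_one w]
    rw [← Real.rpow_add hw]; norm_num
  have hw32 : w^2 * w ^ (-(1:ℝ)/2) = w ^ ((3:ℝ)/2) := by
    rw [← Real.rpow_natCast w 2, ← Real.rpow_add hw]; norm_num
  have hB : w * (l*w) ^ (-(1:ℝ)/2) = l ^ (-(1:ℝ)/2) * w ^ ((1:ℝ)/2) := by
    rw [Real.mul_rpow hl.le hw.le]
    calc w * (l ^ (-(1:ℝ)/2) * w ^ (-(1:ℝ)/2))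
        = l ^ (-(1:ℝ)/2) * (w * w ^ (-(1:ℝ)/2)) := by ring
      _ = l ^ (-(1:ℝ)/2) * w ^ ((1:ℝ)/2) := by rw [hwhalf]
  have hC : w^2 * (l*w) ^ (-(1:ℝ)/2) = l ^ (-(1:ℝ)/2) * w ^ ((3:ℝ)/2) := by
    rw [Real.mul_rpow hl.le hw.le]
    calc w^2 * (l ^ (-(1:ℝ)/2) * w ^ (-(1:ℝ)/2))
        = l ^ (-(1:ℝ)/2) * (w^2 * w ^ (-(1:ℝ)/2)) := by ring
      _ = l ^ (-(1:ℝ)/2) * w ^ ((3:ℝ)/2) := by rw [hw32]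
  have hrpowpos : ∀ x : ℝ, 0 < x → ∀ e : ℝ, 0 < x ^ e := fun x hx e => Real.rpow_pos_of_pos hx e
  refine ⟨?_, ?_, ?_⟩
  · -- value bound
    rcases le_or_gt (1/2) (l*w) with hge | hlt
    · have h1 : |(1 - χ (l*w)) * J0 (l*w)| ≤ M := by
        calc |(1 - χ (l*w)) * J0 (l*w)| = |1 - χ (l*w)| * |J0 (l*w)| := abs_mul _ _
          _ ≤ M * 1 := mul_le_mul (hb0 _) (J0_abs_le_one _) (abs_nonneg _) hM0
          _ = M := mul_one M
      have h2 : (1:ℝ)/2 ≤ (l*w) ^ ((1:ℝ)/2) := by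
        have h14 : ((1:ℝ)/4) ^ ((1:ℝ)/2) = 1/2 := by
          rw [show (1:ℝ)/4 = (1/2)^(2:ℕ) by norm_num, ← Real.rpow_natCast ((1:ℝ)/2) 2,
            ← Real.rpow_mul (by norm_num)]
          norm_num
        calc (1:ℝ)/2 = ((1:ℝ)/4) ^ ((1:ℝ)/2) := h14.symm
          _ ≤ (l*w) ^ ((1:ℝ)/2) := Real.rpow_le_rpow (by norm_num) (by linarith) (by norm_num)
      calc |(1 - χ (l*w)) * J0 (l*w)| ≤ M := h1
        _ ≤ 48 * M * ((l*w) ^ ((1:ℝ)/2)) := by nlinarith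
        _ = 48 * M * l ^ ((1:ℝ)/2) * w ^ ((1:ℝ)/2) := by rw [← hA]; ring
    · have hc : χ (l*w) = 1 := hχ1 _ (by rw [abs_of_pos hr0]; linarith)
      rw [hc]
      simp only [sub_self, zero_mul, abs_zero]
      positivity
  · -- first derivative
    rw [hderivF]
    rcases le_or_gt (1/2) (l*w) with hge | hlt
    · have h1 : |F₁ l| ≤ 24 * M * (w * (l*w) ^ (-(1:ℝ)/2)) := by
        simp only [hF₁def]
        rw [abs_mul, abs_of_pos hw]
        have e1 : |(-(χ₁ (l*w))) * J0 (l*w)| ≤ M * (12 * (l*w) ^ (-(1:ℝ)/2)) := by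
          rw [abs_mul, abs_neg]
          exact mul_le_mul (hb1 _) (J0_decay hge) (abs_nonneg _) hM0
        have e2 : |(1 - χ (l*w)) * J1 (l*w)| ≤ M * (12 * (l*w) ^ (-(1:ℝ)/2)) := by
          rw [abs_mul]
          exact mul_le_mul (hb0 _) (J1_decay hge) (abs_nonneg _) hM0
        have e3 := (abs_add_le ((-(χ₁ (l*w))) * J0 (l*w)) ((1 - χ (l*w)) * J1 (l*w))).trans
          (by linarith : |(-(χ₁ (l*w))) * J0 (l*w)| + |(1 - χ (l*w)) * J1 (l*w)|
            ≤ 24 * M * ((l*w) ^ (-(1:ℝ)/2)))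
        calc w * |(-(χ₁ (l*w))) * J0 (l*w) + (1 - χ (l*w)) * J1 (l*w)|
            ≤ w * (24 * M * ((l*w) ^ (-(1:ℝ)/2))) := by gcongr
          _ = 24 * M * (w * (l*w) ^ (-(1:ℝ)/2)) := by ring
      calc |F₁ l| ≤ 24 * M * (w * (l*w) ^ (-(1:ℝ)/2)) := h1
        _ ≤ 48 * M * (w * (l*w) ^ (-(1:ℝ)/2)) := by
            have : 0 ≤ w * (l*w) ^ (-(1:ℝ)/2) := by positivity
            nlinarith
        _ = 48 * M * l ^ (-(1:ℝ)/2) * w ^ ((1:ℝ)/2) := by rw [hB]; ring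
    · -- vanishing region
      have hU : IsOpen {s : ℝ | |s * w| < 1/2} :=
        isOpen_lt (continuous_abs.comp (continuous_id.mul continuous_const)) continuous_const
      have hlU : l ∈ {s : ℝ | |s * w| < 1/2} := by
        simp only [mem_setOf_eq, abs_of_pos hr0]; exact hlt
      have hev : F₁ =ᶠ[nhds l] fun _ => (0:ℝ) := by
        filter_upwards [hU.mem_nhds hlU] with x hx
        have hc : χ (x*w) = 1 := hχ1 _ hx.le
        have hc1 : χ₁ (x*w) = 0 := by
          have hopen2 : IsOpen {t : ℝ | |t| < 1/2} := isOpen_lt continuous_abs continuous_const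
          have hev2 : χ =ᶠ[nhds (x*w)] fun _ => (1:ℝ) := by
            filter_upwards [hopen2.mem_nhds hx] with y hy using hχ1 y hy.le
          rw [hχ₁def, hev2.deriv_eq, deriv_const]
        simp only [hF₁def, hc, hc1, sub_self, neg_zero, zero_mul, mul_zero, add_zero, zero_add]
      rw [hev.self_of_nhds]
      simp only [abs_zero]
      positivity
  · -- second derivative
    rw [hiter]
    rcases le_or_gt (1/2) (l*w) with hge | hlt
    · rw [(hF₁ l).deriv]
      have h1 : |F₂ l| ≤ 48 * M * (w^2 * (l*w) ^ (-(1:ℝ)/2)) := by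
        simp only [hF₂def]
        rw [abs_mul, abs_of_pos (by positivity : (0:ℝ) < w^2)]
        have e1 : |(-(χ₂ (l*w))) * J0 (l*w)| ≤ M * (12 * (l*w) ^ (-(1:ℝ)/2)) := by
          rw [abs_mul, abs_neg]
          exact mul_le_mul (hb2 _) (J0_decay hge) (abs_nonneg _) hM0
        have e2 : |2*(χ₁ (l*w)) * J1 (l*w)| ≤ 2 * (M * (12 * (l*w) ^ (-(1:ℝ)/2))) := by
          rw [abs_mul, abs_mul, abs_two]
          have := mul_le_mul (hb1 (l*w)) (J1_decay hge) (abs_nonneg _) hM0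
          nlinarith [abs_nonneg (χ₁ (l*w)), abs_nonneg (J1 (l*w))]
        have e3 : |(1 - χ (l*w)) * J2 (l*w)| ≤ M * (12 * (l*w) ^ (-(1:ℝ)/2)) := by
          rw [abs_mul]
          exact mul_le_mul (hb0 _) (J2_decay hge) (abs_nonneg _) hM0
        have e4 : |(-(χ₂ (l*w))) * J0 (l*w) - 2*(χ₁ (l*w)) * J1 (l*w) + (1 - χ (l*w)) * J2 (l*w)|
            ≤ 48 * M * ((l*w) ^ (-(1:ℝ)/2)) := by
          calc |(-(χ₂ (l*w))) * J0 (l*w) - 2*(χ₁ (l*w)) * J1 (l*w) + (1 - χ (l*w)) * J2 (l*w)|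
              ≤ |(-(χ₂ (l*w))) * J0 (l*w) - 2*(χ₁ (l*w)) * J1 (l*w)| + |(1 - χ (l*w)) * J2 (l*w)| :=
                abs_add_le _ _
            _ ≤ (|(-(χ₂ (l*w))) * J0 (l*w)| + |2*(χ₁ (l*w)) * J1 (l*w)|)
                + |(1 - χ (l*w)) * J2 (l*w)| := by gcongr; exact abs_sub _ _
            _ ≤ 48 * M * ((l*w) ^ (-(1:ℝ)/2)) := by linarith
        calc w^2 * |(-(χ₂ (l*w))) * J0 (l*w) - 2*(χ₁ (l*w)) * J1 (l*w) + (1 - χ (l*w)) * J2 (l*w)|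
            ≤ w^2 * (48 * M * ((l*w) ^ (-(1:ℝ)/2))) := by gcongr
          _ = 48 * M * (w^2 * (l*w) ^ (-(1:ℝ)/2)) := by ring
      calc |F₂ l| ≤ 48 * M * (w^2 * (l*w) ^ (-(1:ℝ)/2)) := h1
        _ = 48 * M * l ^ (-(1:ℝ)/2) * w ^ ((3:ℝ)/2) := by rw [hC]; ring
    · have hU : IsOpen {s : ℝ | |s * w| < 1/2} :=
        isOpen_lt (continuous_abs.comp (continuous_id.mul continuous_const)) continuous_const
      have hlU : l ∈ {s : ℝ | |s * w| < 1/2} := by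
        simp only [mem_setOf_eq, abs_of_pos hr0]; exact hlt
      have hev : F₁ =ᶠ[nhds l] fun _ => (0:ℝ) := by
        filter_upwards [hU.mem_nhds hlU] with x hx
        have hc : χ (x*w) = 1 := hχ1 _ hx.le
        have hc1 : χ₁ (x*w) = 0 := by
          have hopen2 : IsOpen {t : ℝ | |t| < 1/2} := isOpen_lt continuous_abs continuous_const
          have hev2 : χ =ᶠ[nhds (x*w)] fun _ => (1:ℝ) := by
            filter_upwards [hopen2.mem_nhds hx] with y hy using hχ1 y hy.le
          rw [hχ₁def, hev2.deriv_eq, deriv_const]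
        simp only [hF₁def, hc, hc1, sub_self, neg_zero, zero_mul, mul_zero, add_zero, zero_add]
      rw [hev.deriv_eq, deriv_const]
      simp only [abs_zero]
      positivity
end
end

section
/- Let H be a complex Hilbert space, let A and S be bounded linear operators on H with S² = S, and assume A + S is invertible (has a bounded two-sided inverse). Set B := S − S(A+S)^{−1}S. Then A is invertible if and only if B is invertible in SH, i.e., there exists a bounded operator B' on H with S B' S = B' and B B' = B' B = S. Moreover, in that case A^{−1} = (A+S)^{−1} + (A+S)^{−1} S B' S (A+S)^{−1}. -/
noncomputable section

private lemma jn_left {R : Type*} [Ring R] (A S T B' : R) (hS : S * S = S)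
    (hT₁ : (A + S) * T = 1) (hB1 : (S - S * T * S) * B' = S) :
    A * (T + T * S * B' * S * T) = 1 := by
  have hAT : A * T = 1 - S * T := by rw [← hT₁]; noncomm_ring
  calc A * (T + T * S * B' * S * T)
      = A * T + (A * T) * S * B' * S * T := by noncomm_ring
    _ = (1 - S * T) + (1 - S * T) * S * B' * S * T := by rw [hAT]
    _ = 1 - S * T + ((S - S * T * S) * B') * (S * T) := by noncomm_ring
    _ = 1 - S * T + S * (S * T) := by rw [hB1]
    _ = 1 - S * T + (S * S) * T := by noncomm_ring
    _ = 1 - S * T + S * T := by rw [hS]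
    _ = 1 := by noncomm_ring

private lemma jn_right {R : Type*} [Ring R] (A S T B' : R) (hS : S * S = S)
    (hT₂ : T * (A + S) = 1) (hB2 : B' * (S - S * T * S) = S) :
    (T + T * S * B' * S * T) * A = 1 := by
  have hTA : T * A = 1 - T * S := by rw [← hT₂]; noncomm_ring
  calc (T + T * S * B' * S * T) * A
      = T * A + T * S * B' * S * (T * A) := by noncomm_ring
    _ = (1 - T * S) + T * S * B' * S * (1 - T * S) := by rw [hTA]
    _ = 1 - T * S + (T * S) * (B' * (S - S * T * S)) := by noncomm_ring
    _ = 1 - T * S + (T * S) * S := by rw [hB2]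
    _ = 1 - T * S + T * (S * S) := by noncomm_ring
    _ = 1 - T * S + T * S := by rw [hS]
    _ = 1 := by noncomm_ring

/-- (Jensen–Nenciu inversion lemma.) Let `A`, `S` be bounded operators on a
complex Hilbert space with `S` idempotent, and suppose `A + S` is invertible with inverse `T`.
Set `B = S − S T S`. Then `A` is invertible iff `B` is invertible in the corner `S H(H) S`
(i.e. there is `B'` with `S B' S = B'` and `B B' = B' B = S`), and in that case
`A⁻¹ = T + T S B' S T`. -/
theorem jensen_nenciu_inversion
    {H : Type*} [NormedAddCommGroup H] [InnerProductSpace ℂ H] [CompleteSpace H]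
    (A S T : H →L[ℂ] H) (hS : S * S = S)
    (hT₁ : (A + S) * T = 1) (hT₂ : T * (A + S) = 1) :
    ((∃ A' : H →L[ℂ] H, A * A' = 1 ∧ A' * A = 1) ↔
      (∃ B' : H →L[ℂ] H, S * B' * S = B' ∧ (S - S * T * S) * B' = S ∧ B' * (S - S * T * S) = S)) ∧
    (∀ B' : H →L[ℂ] H, S * B' * S = B' →
      (S - S * T * S) * B' = S → B' * (S - S * T * S) = S →
      ∀ A' : H →L[ℂ] H, A * A' = 1 → A' * A = 1 →
        A' = T + T * S * B' * S * T) := by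
  have hAT : A * T = 1 - S * T := by rw [← hT₁]; noncomm_ring
  have hTA : T * A = 1 - T * S := by rw [← hT₂]; noncomm_ring
  constructor
  · constructor
    · rintro ⟨A', h1, h2⟩
      refine ⟨S + S * A' * S, ?_, ?_, ?_⟩
      · have e : S * (S + S * A' * S) * S = S * S * S + S * S * A' * (S * S) := by
          noncomm_ring
        rw [e]; simp only [hS]
      · calc (S - S * T * S) * (S + S * A' * S)
            = S * S + (S * S) * A' * S - S * T * (S * S) - S * T * (S * S) * A' * S := by
              noncomm_ring
          _ = S + S * A' * S - S * T * S - S * T * S * A' * S := by rw [hS]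
          _ = S + S * ((1 - T * S) * A') * S - S * T * S := by noncomm_ring
          _ = S + S * (T * A * A') * S - S * T * S := by rw [hTA]
          _ = S + S * (T * (A * A')) * S - S * T * S := by noncomm_ring
          _ = S + S * (T * 1) * S - S * T * S := by rw [h1]
          _ = S := by noncomm_ring
      · calc (S + S * A' * S) * (S - S * T * S)
            = S * S + S * A' * (S * S) - (S * S) * T * S - S * A' * (S * S) * T * S := by
              noncomm_ring
          _ = S + S * A' * S - S * T * S - S * A' * S * T * S := by rw [hS]
          _ = S + S * (A' * (1 - S * T)) * S - S * T * S := by noncomm_ring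
          _ = S + S * (A' * (A * T)) * S - S * T * S := by rw [hAT]
          _ = S + S * ((A' * A) * T) * S - S * T * S := by noncomm_ring
          _ = S + S * (1 * T) * S - S * T * S := by rw [h2]
          _ = S := by noncomm_ring
    · rintro ⟨B', hB0, hB1, hB2⟩
      exact ⟨T + T * S * B' * S * T, jn_left A S T B' hS hT₁ hB1,
        jn_right A S T B' hS hT₂ hB2⟩
  · intro B' hB0 hB1 hB2 A' hA1 hA2
    have hAC : A * (T + T * S * B' * S * T) = 1 := jn_left A S T B' hS hT₁ hB1
    calc A' = A' * 1 := by rw [mul_one]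
      _ = A' * (A * (T + T * S * B' * S * T)) := by rw [hAC]
      _ = (A' * A) * (T + T * S * B' * S * T) := by noncomm_ring
      _ = T + T * S * B' * S * T := by rw [hA2, one_mul]
end
end

section
/- Let μ > 0 and define, for λ ≥ 0 and x ≠ y in ℝ², R₂(λ)(x,y) := (1/(2π)) K₀( √(2μ+λ²) |x−y| ), where K₀(s) = ∫₀^∞ e^{−s cosh t} dt is the modified Bessel function of the second kind of order zero. Then there is a constant C (depending only on μ) such that for all λ ∈ (0,1] and all x ≠ y in ℝ²: |R₂(λ)(x,y)| ≤ C (1 + log⁻|x−y|) and |∂_λ^k R₂(λ)(x,y)| ≤ C for k = 1, 2. -/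
open MeasureTheory Real Set

noncomputable section

/-- The modified Bessel function of the second kind of order zero,
`K₀(s) = ∫₀^∞ e^{−s cosh t} dt`. -/
def K0 (s : ℝ) : ℝ := ∫ t in Set.Ioi (0:ℝ), Real.exp (-s * Real.cosh t)

/-- `log⁻(s) = −log s` for `0 < s < 1`, and `0` otherwise. -/
def logMinus (s : ℝ) : ℝ := if 0 < s ∧ s < 1 then -Real.log s else 0

/-!
Write `Kₙ(a) = ∫₀^∞ coshⁿ t e^{-a cosh t} dt` (`besselMoment n a`), so that `K₀ = K0`.
Differentiating under the integral sign gives `∂ₐ Kₙ = -Kₙ₊₁`, so with `q(λ) = √(2μ+λ²)` and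
`r = |x-y|` the first two `λ`-derivatives of `K₀(q r)` are combinations of `r K₁(q r)`,
`r K₁(q r) / q` and `r² K₂(q r)` with bounded coefficients. Since `eᵗ/2 ≤ cosh t ≤ eᵗ`, the
substitution `u = eᵗ` turns `Kₙ₊₁(a)` into a Gamma integral and gives `aⁿ⁺¹ Kₙ₊₁(a) ≤ 2ⁿ⁺¹ n!`,
which absorbs the powers of `r`; as `q ≥ √(2μ)`, the derivatives are bounded. For `K₀` itself,
the integrand is `≤ 1` on `[0, log⁺(2/a)]` and `≤ (2/a) e^{-t}` beyond, so
`K₀(a) ≤ 1 + log⁺(2/a)`, and `log⁺(2/(q r)) ≤ log⁺(2/√(2μ)) + log⁻ r`.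
-/

open Filter
open scoped Nat

lemma integrableOn_pow_mul_exp_neg_mul (n : ℕ) {b : ℝ} (hb : 0 < b) :
    IntegrableOn (fun u : ℝ => u ^ n * exp (-b * u)) (Ioi 0) := by
  refine (integrableOn_rpow_mul_exp_neg_mul_rpow (s := n)
    (neg_one_lt_zero.trans_le n.cast_nonneg) one_pos hb).congr_fun (fun u _ => ?_) measurableSet_Ioi
  simp only [rpow_natCast, rpow_one]

lemma integral_pow_mul_exp_neg_mul (n : ℕ) {b : ℝ} (hb : 0 < b) :
    ∫ u in Ioi (0:ℝ), u ^ n * exp (-b * u) = n ! / b ^ (n + 1) := by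
  have h := integral_rpow_mul_exp_neg_mul_Ioi (a := n + 1) (by positivity) hb
  rw [Gamma_nat_eq_factorial, add_sub_cancel_right] at h
  calc ∫ u in Ioi (0:ℝ), u ^ n * exp (-b * u)
      = ∫ u in Ioi (0:ℝ), u ^ (n : ℝ) * exp (-(b * u)) := by simp only [rpow_natCast, neg_mul]
    _ = n ! / b ^ (n + 1) := by
      rw [h, ← Nat.cast_succ, rpow_natCast, one_div, inv_pow, div_eq_inv_mul]

lemma integrableOn_exp_pow_mul_exp_neg_mul_exp (n : ℕ) {b : ℝ} (hb : 0 < b) :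
    IntegrableOn (fun t : ℝ => exp t ^ (n + 1) * exp (-b * exp t)) (Ioi 0) := by
  have h := (integrableOn_comp_exp_Ioi (fun u => u ^ n * exp (-b * u)) 0).2
    ((integrableOn_pow_mul_exp_neg_mul n hb).mono_set (Ioi_subset_Ioi (by simp)))
  refine h.congr_fun (fun t _ => ?_) measurableSet_Ioi
  simp only [smul_eq_mul]; ring

lemma integral_exp_pow_mul_exp_neg_mul_exp_le (n : ℕ) {b : ℝ} (hb : 0 < b) :
    ∫ t in Ioi (0:ℝ), exp t ^ (n + 1) * exp (-b * exp t) ≤ n ! / b ^ (n + 1) := by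
  have hsub : ∫ t in Ioi (0:ℝ), exp t ^ (n + 1) * exp (-b * exp t)
      = ∫ u in Ioi (1:ℝ), u ^ n * exp (-b * u) := by
    rw [← exp_zero, ← integral_comp_exp_Ioi]
    refine setIntegral_congr_fun measurableSet_Ioi fun t _ => ?_
    simp only [smul_eq_mul]; ring
  rw [hsub, ← integral_pow_mul_exp_neg_mul n hb]
  exact setIntegral_mono_set (integrableOn_pow_mul_exp_neg_mul n hb)
    (ae_restrict_of_forall_mem measurableSet_Ioi fun u (hu : 0 < u) => by positivity)
    (Ioi_subset_Ioi zero_le_one).eventuallyLE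

lemma exp_div_two_le_cosh (t : ℝ) : exp t / 2 ≤ cosh t := by
  rw [cosh_eq]; linarith [exp_pos (-t)]

lemma cosh_le_exp {t : ℝ} (ht : 0 ≤ t) : cosh t ≤ exp t := by
  rw [cosh_eq]; linarith [exp_le_exp.2 (by linarith : -t ≤ t)]

lemma cosh_pow_mul_exp_neg_mul_cosh_le (n : ℕ) {a t : ℝ} (ha : 0 ≤ a) (ht : 0 ≤ t) :
    cosh t ^ n * exp (-a * cosh t) ≤ exp t ^ n * exp (-(a / 2) * exp t) := by
  have hexp : -a * cosh t ≤ -(a / 2) * exp t := by nlinarith [exp_div_two_le_cosh t]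
  gcongr
  exact cosh_le_exp ht

def besselMoment (n : ℕ) (a : ℝ) : ℝ := ∫ t in Ioi (0:ℝ), cosh t ^ n * exp (-a * cosh t)

lemma K0_eq_besselMoment_zero : K0 = besselMoment 0 := by
  ext a; simp [K0, besselMoment]

lemma besselMoment_nonneg (n : ℕ) (a : ℝ) : 0 ≤ besselMoment n a :=
  setIntegral_nonneg measurableSet_Ioi fun t _ => by positivity

lemma K0_nonneg (a : ℝ) : 0 ≤ K0 a :=
  K0_eq_besselMoment_zero ▸ besselMoment_nonneg 0 a

lemma integrableOn_cosh_pow_mul_exp_neg_mul_cosh (n : ℕ) {a : ℝ} (ha : 0 < a) :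
    IntegrableOn (fun t => cosh t ^ n * exp (-a * cosh t)) (Ioi 0) := by
  refine (integrableOn_exp_pow_mul_exp_neg_mul_exp n (half_pos ha)).mono' (by fun_prop) ?_
  filter_upwards [ae_restrict_mem measurableSet_Ioi] with t (ht : 0 < t)
  rw [norm_of_nonneg (by positivity)]
  calc cosh t ^ n * exp (-a * cosh t) ≤ exp t ^ n * exp (-(a / 2) * exp t) :=
        cosh_pow_mul_exp_neg_mul_cosh_le n ha.le ht.le
    _ ≤ exp t ^ (n + 1) * exp (-(a / 2) * exp t) := by
        gcongr
        · exact one_le_exp ht.le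
        · omega

lemma pow_mul_besselMoment_succ_le (n : ℕ) {a : ℝ} (ha : 0 < a) :
    a ^ (n + 1) * besselMoment (n + 1) a ≤ 2 ^ (n + 1) * n ! := by
  have hmoment : besselMoment (n + 1) a ≤ n ! / (a / 2) ^ (n + 1) :=
    calc besselMoment (n + 1) a
        ≤ ∫ t in Ioi (0:ℝ), exp t ^ (n + 1) * exp (-(a / 2) * exp t) :=
          setIntegral_mono_on (integrableOn_cosh_pow_mul_exp_neg_mul_cosh _ ha)
            (integrableOn_exp_pow_mul_exp_neg_mul_exp n (half_pos ha)) measurableSet_Ioi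
            fun t ht => cosh_pow_mul_exp_neg_mul_cosh_le _ ha.le (le_of_lt ht)
      _ ≤ n ! / (a / 2) ^ (n + 1) := integral_exp_pow_mul_exp_neg_mul_exp_le n (half_pos ha)
  calc a ^ (n + 1) * besselMoment (n + 1) a ≤ a ^ (n + 1) * (n ! / (a / 2) ^ (n + 1)) := by
        gcongr
    _ = 2 ^ (n + 1) * n ! := by field_simp; rw [← mul_pow, div_mul_cancel₀ a two_ne_zero]

lemma exp_neg_le_inv {y : ℝ} (hy : 0 < y) : exp (-y) ≤ y⁻¹ := by
  rw [exp_neg]; exact inv_anti₀ hy (by linarith [add_one_le_exp y])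

lemma K0_le_one_add_posLog {a : ℝ} (ha : 0 < a) : K0 a ≤ 1 + log⁺ (2 / a) := by
  set T := log⁺ (2 / a)
  have hT : 0 ≤ T := posLog_nonneg
  have hexpT : 2 / a ≤ exp T :=
    calc 2 / a = exp (log (2 / a)) := (exp_log (by positivity)).symm
      _ ≤ exp T := exp_le_exp.2 (le_max_right _ _)
  have hint : IntegrableOn (fun t => exp (-a * cosh t)) (Ioi 0) := by
    simpa using integrableOn_cosh_pow_mul_exp_neg_mul_cosh 0 ha
  have hsplit : K0 a = (∫ t in Ioc 0 T, exp (-a * cosh t)) + ∫ t in Ioi T, exp (-a * cosh t) := by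
    rw [K0, ← Ioc_union_Ioi_eq_Ioi hT]
    exact setIntegral_union (Ioc_disjoint_Ioi le_rfl) measurableSet_Ioi
      (hint.mono_set Ioc_subset_Ioi_self) (hint.mono_set (Ioi_subset_Ioi hT))
  have hnear : ∫ t in Ioc 0 T, exp (-a * cosh t) ≤ T :=
    calc ∫ t in Ioc 0 T, exp (-a * cosh t) ≤ ∫ _ in Ioc 0 T, (1 : ℝ) :=
          setIntegral_mono_on (hint.mono_set Ioc_subset_Ioi_self) (integrableOn_const (by simp))
            measurableSet_Ioc fun t _ => exp_le_one_iff.2 (by nlinarith [cosh_pos t])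
      _ = T := by simp [hT]
  have hfar : ∫ t in Ioi T, exp (-a * cosh t) ≤ 1 :=
    calc ∫ t in Ioi T, exp (-a * cosh t) ≤ ∫ t in Ioi T, 2 / a * exp (-t) := by
          refine setIntegral_mono_on (hint.mono_set (Ioi_subset_Ioi hT))
            ((integrableOn_exp_neg_Ioi T).const_mul _) measurableSet_Ioi fun t _ => ?_
          calc exp (-a * cosh t) ≤ exp (-(a / 2 * exp t)) :=
                exp_le_exp.2 (by nlinarith [exp_div_two_le_cosh t])
            _ ≤ (a / 2 * exp t)⁻¹ := exp_neg_le_inv (by positivity)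
            _ = 2 / a * exp (-t) := by rw [exp_neg]; field_simp
      _ = 2 / a * exp (-T) := by rw [integral_const_mul, integral_exp_neg_Ioi]
      _ ≤ 1 := by
          rw [exp_neg, ← div_eq_mul_inv, div_le_one (exp_pos T)]; exact hexpT
  linarith

lemma hasDerivAt_besselMoment (n : ℕ) {a : ℝ} (ha : 0 < a) :
    HasDerivAt (besselMoment n) (-besselMoment (n + 1) a) a := by
  have hderiv (t b : ℝ) : HasDerivAt (fun b => cosh t ^ n * exp (-b * cosh t))
      (-(cosh t ^ (n + 1) * exp (-b * cosh t))) b := by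
    exact ((((hasDerivAt_neg b).mul_const (cosh t)).exp).const_mul (cosh t ^ n)).congr_deriv
      (by ring)
  have hbound (t b : ℝ) (hb : a / 2 < b) :
      ‖-(cosh t ^ (n + 1) * exp (-b * cosh t))‖ ≤ cosh t ^ (n + 1) * exp (-(a / 2) * cosh t) := by
    rw [norm_neg, norm_of_nonneg (by positivity)]
    gcongr
  have key := hasDerivAt_integral_of_dominated_loc_of_deriv_le (μ := volume.restrict (Ioi 0))
    (F := fun b t => cosh t ^ n * exp (-b * cosh t))
    (F' := fun b t => -(cosh t ^ (n + 1) * exp (-b * cosh t)))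
    (Ioi_mem_nhds (half_lt_self ha)) (Eventually.of_forall fun b => by fun_prop)
    (integrableOn_cosh_pow_mul_exp_neg_mul_cosh n ha) (by fun_prop)
    (ae_of_all _ fun t b hb => hbound t b hb)
    (integrableOn_cosh_pow_mul_exp_neg_mul_cosh (n + 1) (half_pos ha))
    (ae_of_all _ fun t b _ => hderiv t b)
  rw [besselMoment, ← integral_neg]
  exact key.2

lemma logMinus_eq_posLog_inv {r : ℝ} (hr : 0 < r) : logMinus r = log⁺ r⁻¹ := by
  rw [logMinus, posLog, log_inv]
  split_ifs with h
  · exact (max_eq_right (neg_nonneg.2 (log_nonpos hr.le h.2.le))).symm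
  · have h1 : 1 ≤ r := le_of_not_gt fun h1 => h ⟨hr, h1⟩
    exact (max_eq_left (neg_nonpos.2 (log_nonneg h1))).symm

section Kernel

variable {c r : ℝ}

lemma hasDerivAt_sqrt_add_sq (hc : 0 < c) (s : ℝ) :
    HasDerivAt (fun s => √(c + s ^ 2)) (s / √(c + s ^ 2)) s := by
  have hpos : 0 < √(c + s ^ 2) := by positivity
  refine (((hasDerivAt_pow 2 s).const_add c).sqrt (by positivity)).congr_deriv ?_
  field_simp
  norm_num

lemma hasDerivAt_div_sqrt_add_sq (hc : 0 < c) (s : ℝ) :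
    HasDerivAt (fun s => s / √(c + s ^ 2)) (c / √(c + s ^ 2) ^ 3) s := by
  have hpos : 0 < √(c + s ^ 2) := by positivity
  refine ((hasDerivAt_id s).div (hasDerivAt_sqrt_add_sq hc s) hpos.ne').congr_deriv ?_
  have hsq : √(c + s ^ 2) ^ 2 = c + s ^ 2 := sq_sqrt (by positivity)
  simp only [id]
  field_simp
  linear_combination hsq

lemma abs_div_sqrt_add_sq_le_one (hc : 0 ≤ c) (s : ℝ) : |s / √(c + s ^ 2)| ≤ 1 := by
  rw [abs_div, abs_of_nonneg (sqrt_nonneg _), ← sqrt_sq_eq_abs]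
  exact div_le_one_of_le₀ (sqrt_le_sqrt (by linarith)) (sqrt_nonneg _)

lemma hasDerivAt_besselMoment_sqrt_add_sq_mul (n : ℕ) (hc : 0 < c) (hr : 0 < r) (s : ℝ) :
    HasDerivAt (fun s => besselMoment n (√(c + s ^ 2) * r))
      (-besselMoment (n + 1) (√(c + s ^ 2) * r) * (s / √(c + s ^ 2) * r)) s :=
  (hasDerivAt_besselMoment n (by positivity)).comp s ((hasDerivAt_sqrt_add_sq hc s).mul_const r)

lemma K0_sqrt_add_sq_mul_le (hc : 0 < c) (hr : 0 < r) (s : ℝ) :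
    K0 (√(c + s ^ 2) * r) ≤ 1 + log⁺ (2 / √c) + logMinus r := by
  have hc' : 0 < √c := sqrt_pos.2 hc
  have hcq : √c ≤ √(c + s ^ 2) := sqrt_le_sqrt (le_add_of_nonneg_right (sq_nonneg s))
  calc K0 (√(c + s ^ 2) * r) ≤ 1 + log⁺ (2 / (√(c + s ^ 2) * r)) :=
        K0_le_one_add_posLog (by positivity)
    _ ≤ 1 + log⁺ (2 / √c * r⁻¹) := by
        refine (add_le_add_iff_left 1).2 (posLog_le_posLog (by positivity) ?_)
        calc 2 / (√(c + s ^ 2) * r) ≤ 2 / (√c * r) := by gcongr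
          _ = 2 / √c * r⁻¹ := by field_simp
    _ ≤ 1 + (log⁺ (2 / √c) + log⁺ r⁻¹) := by gcongr; exact posLog_mul
    _ = 1 + log⁺ (2 / √c) + logMinus r := by rw [logMinus_eq_posLog_inv hr]; ring

lemma deriv_K0_sqrt_add_sq_mul (hc : 0 < c) (hr : 0 < r) :
    deriv (fun s => K0 (√(c + s ^ 2) * r))
      = fun s => -besselMoment 1 (√(c + s ^ 2) * r) * (s / √(c + s ^ 2) * r) := by
  ext s
  rw [K0_eq_besselMoment_zero]
  exact (hasDerivAt_besselMoment_sqrt_add_sq_mul 0 hc hr s).deriv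

lemma hasDerivAt_deriv_K0_sqrt_add_sq_mul (hc : 0 < c) (hr : 0 < r) (s : ℝ) :
    HasDerivAt (deriv fun s => K0 (√(c + s ^ 2) * r))
      (besselMoment 2 (√(c + s ^ 2) * r) * (s / √(c + s ^ 2) * r) ^ 2
        - besselMoment 1 (√(c + s ^ 2) * r) * (c / √(c + s ^ 2) ^ 3 * r)) s := by
  rw [deriv_K0_sqrt_add_sq_mul hc hr]
  exact ((hasDerivAt_besselMoment_sqrt_add_sq_mul 1 hc hr s).neg.mul
    ((hasDerivAt_div_sqrt_add_sq hc s).mul_const r)).congr_deriv (by simp only [Pi.neg_apply]; ring)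

lemma abs_deriv_K0_sqrt_add_sq_mul_le (hc : 0 < c) (hr : 0 < r) (s : ℝ) :
    |deriv (fun s => K0 (√(c + s ^ 2) * r)) s| ≤ 2 / √c := by
  set q := √(c + s ^ 2)
  have hq : 0 < q := by positivity
  have hcq : √c ≤ q := sqrt_le_sqrt (le_add_of_nonneg_right (sq_nonneg s))
  have hM1 : q * r * besselMoment 1 (q * r) ≤ 2 := by
    simpa using pow_mul_besselMoment_succ_le 0 (by positivity : 0 < q * r)
  have hM1_nonneg := besselMoment_nonneg 1 (q * r)
  rw [deriv_K0_sqrt_add_sq_mul hc hr]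
  calc |-besselMoment 1 (q * r) * (s / q * r)| = besselMoment 1 (q * r) * r * |s / q| := by
        rw [abs_mul, abs_mul, abs_neg, abs_of_nonneg hM1_nonneg, abs_of_pos hr]; ring
    _ ≤ besselMoment 1 (q * r) * r * 1 := by gcongr; exact abs_div_sqrt_add_sq_le_one hc.le s
    _ = q * r * besselMoment 1 (q * r) / q := by field_simp
    _ ≤ 2 / q := by gcongr
    _ ≤ 2 / √c := by gcongr

lemma abs_iteratedDeriv_two_K0_sqrt_add_sq_mul_le (hc : 0 < c) (hr : 0 < r) (s : ℝ) :
    |iteratedDeriv 2 (fun s => K0 (√(c + s ^ 2) * r)) s| ≤ 6 / c := by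
  set q := √(c + s ^ 2)
  have hq : 0 < q := by positivity
  have hq2 : q ^ 2 = c + s ^ 2 := sq_sqrt (by positivity)
  have hM1 : q * r * besselMoment 1 (q * r) ≤ 2 := by
    simpa using pow_mul_besselMoment_succ_le 0 (by positivity : 0 < q * r)
  have hM2 : (q * r) ^ 2 * besselMoment 2 (q * r) ≤ 4 := by
    simpa [show (2 : ℝ) ^ 2 = 4 by norm_num] using
      pow_mul_besselMoment_succ_le 1 (by positivity : 0 < q * r)
  have hM1_nonneg := besselMoment_nonneg 1 (q * r)
  have hM2_nonneg := besselMoment_nonneg 2 (q * r)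
  have hsq : (s / q) ^ 2 ≤ 1 := by
    rw [← sq_abs]; exact pow_le_one₀ (abs_nonneg _) (abs_div_sqrt_add_sq_le_one hc.le s)
  have hcq : c / q ^ 3 ≤ 1 / q := by
    rw [div_le_div_iff₀ (by positivity) hq]; nlinarith [sq_nonneg s]
  rw [iteratedDeriv_succ, iteratedDeriv_one, (hasDerivAt_deriv_K0_sqrt_add_sq_mul hc hr s).deriv]
  calc |besselMoment 2 (q * r) * (s / q * r) ^ 2 - besselMoment 1 (q * r) * (c / q ^ 3 * r)|
      ≤ besselMoment 2 (q * r) * ((s / q) ^ 2 * r ^ 2)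
        + besselMoment 1 (q * r) * (c / q ^ 3 * r) := by
        rw [mul_pow]
        exact (abs_sub _ _).trans_eq (by rw [abs_of_nonneg (by positivity),
          abs_of_nonneg (by positivity)])
    _ ≤ besselMoment 2 (q * r) * (1 * r ^ 2) + besselMoment 1 (q * r) * (1 / q * r) := by
        gcongr
    _ = ((q * r) ^ 2 * besselMoment 2 (q * r) + q * r * besselMoment 1 (q * r)) / q ^ 2 := by
        field_simp
    _ ≤ (4 + 2) / q ^ 2 := by gcongr
    _ ≤ 6 / c := by
        rw [hq2]
        gcongr
        · norm_num
        · exact le_add_of_nonneg_right (sq_nonneg s)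

end Kernel

lemma abs_one_div_two_pi_mul_le (x : ℝ) : |1 / (2 * π) * x| ≤ |x| := by
  rw [abs_mul, abs_of_pos (by positivity)]
  exact mul_le_of_le_one_left (abs_nonneg x)
    ((div_le_one (by positivity)).2 (by linarith [pi_gt_three]))

/-- Bounds on the kernel `R₂(λ)(x,y) = (1/2π)K₀(√(2μ+λ²)|x−y|)` of the
resolvent `(−Δ+2μ+λ²)⁻¹` on `ℝ²`: `|R₂| ≲ 1 + log⁻|x−y|` and `|∂_λ^k R₂| ≲ 1` for
`k = 1, 2`, uniformly for `λ ∈ (0,1]`. -/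
theorem R2_kernel_bounds (μ : ℝ) (hμ : 0 < μ) :
    ∃ C : ℝ, 0 < C ∧ ∀ l : ℝ, 0 < l → l ≤ 1 → ∀ x y : Plane, x ≠ y →
      |(1 / (2 * Real.pi)) * K0 (Real.sqrt (2 * μ + l ^ 2) * ‖x - y‖)| ≤
        C * (1 + logMinus ‖x - y‖) ∧
      |deriv (fun s : ℝ => (1 / (2 * Real.pi)) * K0 (Real.sqrt (2 * μ + s ^ 2) * ‖x - y‖)) l| ≤
        C ∧
      |iteratedDeriv 2
          (fun s : ℝ => (1 / (2 * Real.pi)) * K0 (Real.sqrt (2 * μ + s ^ 2) * ‖x - y‖)) l| ≤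
        C := by
  have hc : 0 < 2 * μ := by positivity
  have hL : 0 ≤ log⁺ (2 / √(2 * μ)) := posLog_nonneg
  have hD : 0 < 2 / √(2 * μ) := by positivity
  have hE : 0 < 6 / (2 * μ) := by positivity
  refine ⟨1 + log⁺ (2 / √(2 * μ)) + 2 / √(2 * μ) + 6 / (2 * μ), by positivity,
    fun l _ _ x y hxy => ?_⟩
  have hr : 0 < ‖x - y‖ := norm_pos_iff.2 (sub_ne_zero.2 hxy)
  have hlogMinus : 0 ≤ logMinus ‖x - y‖ := logMinus_eq_posLog_inv hr ▸ posLog_nonneg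
  rw [deriv_const_mul_field', iteratedDeriv_const_mul_field]
  refine ⟨(abs_one_div_two_pi_mul_le _).trans ?_, (abs_one_div_two_pi_mul_le _).trans ?_,
    (abs_one_div_two_pi_mul_le _).trans ?_⟩
  · rw [abs_of_nonneg (K0_nonneg _)]
    nlinarith [K0_sqrt_add_sq_mul_le hc hr l]
  · linarith [abs_deriv_K0_sqrt_add_sq_mul_le hc hr l]
  · linarith [abs_iteratedDeriv_two_K0_sqrt_add_sq_mul_le hc hr l]
end
end
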